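/- arXiv:2512.15218 — 4 statements merged into one kernel-verified Lean document; each statement's English description precedes it below -/
import Mathlib

section
/- Under the same hypotheses (V smooth with bounded derivatives of order ≥ 2, M = 1 + n² max_{|α|=2} sup |∂^α V|), let T₁ > 0 satisfy 2M^{3/2} e^{M T₁} T₁ < 1/2 and T₁ < 1/3. Then for all x, z, ξ, η ∈ ℝⁿ and all |t| < T₁: |ξ(t;x,ξ) − ξ(t;z,η)| ≥ (1/2)(|ξ−η| − |x−z|). -/
open MeasureTheory

noncomputable section

/-- ℝⁿ with the Euclidean norm. -/
abbrev Eu (n : ℕ) := EuclideanSpace ℝ (Fin n)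

/-- Gradient of `V` expressed through coordinate partial derivatives. -/
def gradV {n : ℕ} (V : Eu n → ℝ) (x : Eu n) : Eu n :=
  (EuclideanSpace.equiv (Fin n) ℝ).symm
    (fun i => fderiv ℝ V x (EuclideanSpace.single i 1))

/-- Second-order partial derivative `∂_i ∂_j V`. -/
def d2V {n : ℕ} (V : Eu n → ℝ) (x : Eu n) (i j : Fin n) : ℝ :=
  fderiv ℝ (fun z => fderiv ℝ V z (EuclideanSpace.single j 1)) x
    (EuclideanSpace.single i 1)


lemma abs_coord_le {n : ℕ} (v : Eu n) (j : Fin n) : |v j| ≤ ‖v‖ := by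
  rw [EuclideanSpace.norm_eq, ← Real.sqrt_sq_eq_abs]
  apply Real.sqrt_le_sqrt
  have := Finset.single_le_sum (f := fun i => ‖v i‖ ^ 2) (fun i _ => by positivity)
    (Finset.mem_univ j)
  simpa [Real.norm_eq_abs, sq_abs] using this

lemma decomp {n : ℕ} (v : Eu n) : v = ∑ j, v j • EuclideanSpace.single j (1:ℝ) := by
  have := (EuclideanSpace.basisFun (Fin n) ℝ).sum_repr v
  simp only [EuclideanSpace.basisFun_repr, EuclideanSpace.basisFun_apply] at this
  exact this.symm

lemma gradV_lip {n : ℕ} (V : Eu n → ℝ) (hV : ContDiff ℝ (⊤ : ℕ∞) V) (M : ℝ) (hM1 : 1 ≤ M)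
    (hM : ∀ (x : Eu n) (i j : Fin n), |d2V V x i j| ≤ (M - 1) / (n ^ 2 : ℝ)) :
    ∀ a b : Eu n, ‖gradV V a - gradV V b‖ ≤ (M - 1) * ‖a - b‖ := by
  intro a b
  set g : Fin n → Eu n → ℝ := fun i z => fderiv ℝ V z (EuclideanSpace.single i 1) with hg
  have hfd : ContDiff ℝ (⊤ : ℕ∞) (fderiv ℝ V) := hV.fderiv_right (by simp)
  have hdg : ∀ i, Differentiable ℝ (g i) := fun i =>
    (hfd.differentiable (by simp)).clm_apply (differentiable_const _)
  -- component bound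
  have hcomp : ∀ i : Fin n, |g i a - g i b| ≤ ((M - 1) / n) * ‖a - b‖ := by
    intro i
    have hn : (0:ℝ) < n := by exact_mod_cast i.pos
    have hopn : ∀ x : Eu n, ‖fderiv ℝ (g i) x‖ ≤ (M - 1) / n := by
      intro x
      apply ContinuousLinearMap.opNorm_le_bound _ (div_nonneg (by linarith) hn.le)
      intro v
      have hv := decomp v
      calc ‖fderiv ℝ (g i) x v‖
          = ‖fderiv ℝ (g i) x (∑ j, v j • EuclideanSpace.single j (1:ℝ))‖ := by rw [← hv]
        _ = ‖∑ j, v j • fderiv ℝ (g i) x (EuclideanSpace.single j 1)‖ := by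
            rw [map_sum]; simp [_root_.map_smul]
        _ ≤ ∑ j, ‖v j • fderiv ℝ (g i) x (EuclideanSpace.single j 1)‖ := norm_sum_le _ _
        _ ≤ ∑ _j : Fin n, ‖v‖ * ((M - 1) / n ^ 2) := by
            apply Finset.sum_le_sum
            intro j _
            rw [norm_smul]
            have h1 : ‖v j‖ ≤ ‖v‖ := abs_coord_le v j
            have h2 : ‖fderiv ℝ (g i) x (EuclideanSpace.single j 1)‖ ≤ (M - 1) / n ^ 2 := by
              have := hM x j i
              simpa [d2V, Real.norm_eq_abs] using this
            exact mul_le_mul h1 h2 (norm_nonneg _) (norm_nonneg _)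
        _ = (M - 1) / n * ‖v‖ := by
            rw [Finset.sum_const, Finset.card_univ, Fintype.card_fin]
            field_simp
            have hn0 : (n:ℝ) ≠ 0 := hn.ne'
            have e : (n:ℝ) ^ 2 * (n:ℝ)⁻¹ ^ 2 = 1 := by rw [← mul_pow, mul_inv_cancel₀ hn0, one_pow]
            linear_combination (‖v‖ * M - ‖v‖) * e
    have := Convex.norm_image_sub_le_of_norm_fderiv_le
      (fun x _ => (hdg i x)) (fun x _ => hopn x) convex_univ
      (Set.mem_univ b) (Set.mem_univ a)
    simpa [Real.norm_eq_abs] using this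
  -- assemble
  have hnn : (0:ℝ) ≤ (M - 1) * ‖a - b‖ := by
    have := norm_nonneg (a - b); nlinarith
  rw [EuclideanSpace.norm_eq, show (M - 1) * ‖a - b‖ = Real.sqrt (((M - 1) * ‖a - b‖)^2) from
    (Real.sqrt_sq hnn).symm]
  apply Real.sqrt_le_sqrt
  have hterm : ∀ i : Fin n, ‖(gradV V a - gradV V b) i‖ ^ 2 ≤ (((M - 1) / n) * ‖a - b‖) ^ 2 := by
    intro i
    have h : (gradV V a - gradV V b) i = g i a - g i b := rfl
    rw [h, Real.norm_eq_abs]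
    have := hcomp i
    have hnn2 : (0:ℝ) ≤ |g i a - g i b| := abs_nonneg _
    nlinarith [sq_abs (g i a - g i b)]
  calc ∑ i, ‖(gradV V a - gradV V b) i‖ ^ 2 ≤ ∑ _i : Fin n, (((M - 1) / n) * ‖a - b‖) ^ 2 :=
        Finset.sum_le_sum fun i _ => hterm i
    _ ≤ ((M - 1) * ‖a - b‖) ^ 2 := by
        rw [Finset.sum_const, Finset.card_univ, Fintype.card_fin, nsmul_eq_mul]
        rcases Nat.eq_zero_or_pos n with h | h
        · subst h; simp; positivity
        · have hn : (1:ℝ) ≤ n := by exact_mod_cast h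
          have h1 : (0:ℝ) ≤ M - 1 := by linarith
          have h2 : (0:ℝ) ≤ ‖a - b‖ := norm_nonneg _
          have key : (n:ℝ) * ((M - 1) / n)^2 ≤ (M - 1)^2 := by
            have heq : (n:ℝ) * ((M - 1) / n)^2 = (M - 1)^2 / n := by
              field_simp
            rw [heq]
            exact div_le_self (sq_nonneg _) hn
          nlinarith [sq_nonneg ‖a - b‖]

lemma gron {E : Type*} [NormedAddCommGroup E] [NormedSpace ℝ E] {f f' : ℝ → E} {K : ℝ}
    (hd : ∀ t, HasDerivAt f (f' t) t) (hb : ∀ t, ‖f' t‖ ≤ K * ‖f t‖) :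
    ∀ t : ℝ, ‖f t‖ ≤ ‖f 0‖ * Real.exp (K * |t|) := by
  have key : ∀ (g g' : ℝ → E), (∀ s, HasDerivAt g (g' s) s) → (∀ s, ‖g' s‖ ≤ K * ‖g s‖) →
      ∀ u : ℝ, 0 ≤ u → ‖g u‖ ≤ ‖g 0‖ * Real.exp (K * u) := by
    intro g g' hdg hbg u hu
    have := norm_le_gronwallBound_of_norm_deriv_right_le (f := g) (f' := g')
      (δ := ‖g 0‖) (K := K) (ε := 0) (a := 0) (b := u)
      (fun s _ => (hdg s).continuousAt.continuousWithinAt)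
      (fun s _ => (hdg s).hasDerivWithinAt)
      le_rfl
      (fun s _ => by simpa using hbg s)
      u (Set.right_mem_Icc.2 hu)
    simpa [gronwallBound_ε0] using this
  intro t
  rcases le_or_gt 0 t with h | h
  · rw [abs_of_nonneg h]; exact key f f' hd hb t h
  · have hdg : ∀ s : ℝ, HasDerivAt (fun s => f (-s)) ((-1 : ℝ) • f' (-s)) s := by
      intro s
      exact (hd (-s)).scomp s (hasDerivAt_neg s)
    have hbg : ∀ s : ℝ, ‖(-1 : ℝ) • f' (-s)‖ ≤ K * ‖f (-s)‖ := by
      intro s; rw [norm_smul]; simpa using hb (-s)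
    have := key (fun s => f (-s)) (fun s => (-1 : ℝ) • f' (-s)) hdg hbg (-t) (by linarith)
    rw [abs_of_neg h]
    simpa using this

/-- on `|t| < T₁` with `2M^{3/2}e^{MT₁}T₁ < 1/2`, `T₁ < 1/3`,
the momentum components of the flow separate:
`|ξ(t;x,ξ) − ξ(t;z,η)| ≥ (1/2)(|ξ−η| − |x−z|)`. -/
theorem flow_momentum_separation {n : ℕ} (V : Eu n → ℝ) (hV : ContDiff ℝ (⊤ : ℕ∞) V)
    (xtraj ξtraj : ℝ → Eu n → Eu n → Eu n)
    (hx0 : ∀ x ξ, xtraj 0 x ξ = x) (hξ0 : ∀ x ξ, ξtraj 0 x ξ = ξ)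
    (hode : ∀ t x ξ,
      HasDerivAt (fun s => xtraj s x ξ) (ξtraj t x ξ) t ∧
      HasDerivAt (fun s => ξtraj s x ξ) (-(gradV V (xtraj t x ξ))) t)
    (M : ℝ) (hM1 : 1 ≤ M)
    (hM : ∀ (x : Eu n) (i j : Fin n), |d2V V x i j| ≤ (M - 1) / (n ^ 2 : ℝ))
    (T₁ : ℝ) (hT₁pos : 0 < T₁)
    (hT₁ : 2 * M ^ ((3 : ℝ) / 2) * Real.exp (M * T₁) * T₁ < 1 / 2)
    (hT₁' : T₁ < 1 / 3) :
    ∀ (t : ℝ), |t| < T₁ → ∀ (x z ξ η : Eu n),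
      ‖ξtraj t x ξ - ξtraj t z η‖ ≥ (1 / 2) * (‖ξ - η‖ - ‖x - z‖) := by
  intro t ht x z ξ η
  have hlip := gradV_lip V hV M hM1 hM
  set F : ℝ → Eu n × Eu n := fun s => (xtraj s x ξ - xtraj s z η, ξtraj s x ξ - ξtraj s z η)
    with hF
  set F' : ℝ → Eu n × Eu n := fun s =>
    (ξtraj s x ξ - ξtraj s z η, -(gradV V (xtraj s x ξ)) - -(gradV V (xtraj s z η))) with hF'
  have hdF : ∀ s, HasDerivAt F (F' s) s := fun s =>
    (((hode s x ξ).1.sub (hode s z η).1)).prodMk (((hode s x ξ).2.sub (hode s z η).2))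
  have hMnn : (0:ℝ) ≤ M := by linarith
  have hbF : ∀ s, ‖F' s‖ ≤ M * ‖F s‖ := by
    intro s
    have h1 : ‖(F s).1‖ ≤ ‖F s‖ := norm_fst_le _
    have h2 : ‖(F s).2‖ ≤ ‖F s‖ := norm_snd_le _
    have hFnn : (0:ℝ) ≤ ‖F s‖ := norm_nonneg _
    rw [Prod.norm_def]
    apply max_le
    · simp only [hF']
      calc ‖ξtraj s x ξ - ξtraj s z η‖ ≤ ‖F s‖ := h2
        _ ≤ M * ‖F s‖ := le_mul_of_one_le_left hFnn hM1
    · simp only [hF']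
      have : ‖-(gradV V (xtraj s x ξ)) - -(gradV V (xtraj s z η))‖
          = ‖gradV V (xtraj s x ξ) - gradV V (xtraj s z η)‖ := by
        rw [← norm_neg]; congr 1; abel
      rw [this]
      calc ‖gradV V (xtraj s x ξ) - gradV V (xtraj s z η)‖
          ≤ (M - 1) * ‖xtraj s x ξ - xtraj s z η‖ := hlip _ _
        _ ≤ (M - 1) * ‖F s‖ := by
            apply mul_le_mul_of_nonneg_left h1 (by linarith)
        _ ≤ M * ‖F s‖ := by nlinarith
  have hgron := gron hdF hbF
  have hF0 : ‖F 0‖ ≤ ‖x - z‖ + ‖ξ - η‖ := by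
    rw [hF]
    simp only [hx0, hξ0]
    rw [Prod.norm_def]
    apply max_le
    · simp [le_add_of_nonneg_right, norm_nonneg]
    · simp [le_add_of_nonneg_left, norm_nonneg]
  set S := ‖x - z‖ + ‖ξ - η‖ with hS
  have hSnn : 0 ≤ S := by positivity
  set C := M * Real.exp (M * T₁) * S with hC
  have hCnn : 0 ≤ C := by positivity
  -- bound on the second derivative component on uIcc 0 t
  have habs : ∀ s ∈ Set.uIcc 0 t, |s| ≤ T₁ := by
    intro s hs
    rw [Set.mem_uIcc] at hs
    rcases hs with ⟨h1, h2⟩ | ⟨h1, h2⟩ <;>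
      cases abs_cases s <;> cases abs_cases t <;>
      (rename_i hs' ht'; rw [hs'.1]; linarith [ht'.1, le_of_lt ht])
  have hbd : ∀ s ∈ Set.uIcc 0 t,
      ‖-(gradV V (xtraj s x ξ)) - -(gradV V (xtraj s z η))‖ ≤ C := by
    intro s hs
    have h1 : ‖(F s).1‖ ≤ ‖F s‖ := norm_fst_le _
    have : ‖-(gradV V (xtraj s x ξ)) - -(gradV V (xtraj s z η))‖
        = ‖gradV V (xtraj s x ξ) - gradV V (xtraj s z η)‖ := by
      rw [← norm_neg]; congr 1; abel
    rw [this]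
    have hFs : ‖F s‖ ≤ S * Real.exp (M * T₁) := by
      calc ‖F s‖ ≤ ‖F 0‖ * Real.exp (M * |s|) := hgron s
        _ ≤ S * Real.exp (M * T₁) := by
            apply mul_le_mul hF0 (Real.exp_le_exp.2 (by nlinarith [habs s hs]))
              (Real.exp_pos _).le hSnn
    calc ‖gradV V (xtraj s x ξ) - gradV V (xtraj s z η)‖
        ≤ (M - 1) * ‖xtraj s x ξ - xtraj s z η‖ := hlip _ _
      _ ≤ (M - 1) * ‖F s‖ := mul_le_mul_of_nonneg_left h1 (by linarith)
      _ ≤ C := by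
          rw [hC]
          nlinarith [norm_nonneg (F s), Real.exp_pos (M * T₁)]
  -- mean value on ξ-component
  have hmvt := Convex.norm_image_sub_le_of_norm_hasDerivWithin_le
    (f := fun s => ξtraj s x ξ - ξtraj s z η)
    (f' := fun s => -(gradV V (xtraj s x ξ)) - -(gradV V (xtraj s z η)))
    (s := Set.uIcc 0 t)
    (fun s _ => (((hode s x ξ).2.sub (hode s z η).2)).hasDerivWithinAt)
    hbd (convex_uIcc 0 t) Set.left_mem_uIcc Set.right_mem_uIcc
  simp only [hξ0] at hmvt
  have hmvt2 : ‖(ξtraj t x ξ - ξtraj t z η) - (ξ - η)‖ ≤ C * T₁ := by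
    calc ‖(ξtraj t x ξ - ξtraj t z η) - (ξ - η)‖ ≤ C * ‖t - 0‖ := hmvt
      _ ≤ C * T₁ := by
          apply mul_le_mul_of_nonneg_left _ hCnn
          simpa using ht.le
  -- numeric: M * exp(M T₁) * T₁ ≤ 1/4
  set P := M ^ ((3:ℝ)/2) with hP
  have hrp : M ≤ P := by
    rw [hP]
    calc M = M ^ (1:ℝ) := (Real.rpow_one M).symm
      _ ≤ M ^ ((3:ℝ)/2) := Real.rpow_le_rpow_of_exponent_le hM1 (by norm_num)
  set E := Real.exp (M * T₁) with hE
  have hEpos : 0 < E := Real.exp_pos _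
  have hnum : M * E * T₁ ≤ 1 / 4 := by
    have h1 : M * E ≤ P * E := mul_le_mul_of_nonneg_right hrp hEpos.le
    have h2 : M * E * T₁ ≤ P * E * T₁ := mul_le_mul_of_nonneg_right h1 hT₁pos.le
    linarith
  have hCT : C * T₁ ≤ (1/4) * S := by
    have h1 : M * E * T₁ * S ≤ (1/4) * S := mul_le_mul_of_nonneg_right hnum hSnn
    calc C * T₁ = M * E * T₁ * S := by rw [hC]; ring
      _ ≤ (1/4) * S := h1
  have hfinal : ‖ξ - η‖ - ‖ξtraj t x ξ - ξtraj t z η‖ ≤ (1/4) * S := by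
    have := norm_sub_norm_le (ξ - η) (ξtraj t x ξ - ξtraj t z η)
    have h2 : ‖(ξ - η) - (ξtraj t x ξ - ξtraj t z η)‖
        = ‖(ξtraj t x ξ - ξtraj t z η) - (ξ - η)‖ := norm_sub_rev _ _
    linarith [hmvt2]
  have h1 : 0 ≤ ‖ξ - η‖ := norm_nonneg _
  have h2 : 0 ≤ ‖x - z‖ := norm_nonneg _
  rw [hS] at hfinal
  linarith
end
end

section
/- Under the same hypotheses, for all x, z, ξ, η ∈ ℝⁿ and all |t| < T₁: |x(t;x,ξ) − x(t;z,η)| ≥ (1/6)(5|x−z| − 3|ξ−η|). -/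
open MeasureTheory

noncomputable section

/-- coordinate bound by norm in Euclidean space -/
lemma Eu.coord_le_norm {n : ℕ} (u : Eu n) (j : Fin n) : |u j| ≤ ‖u‖ := by
  have h := abs_real_inner_le_norm (EuclideanSpace.single j (1 : ℝ)) u
  simpa [EuclideanSpace.inner_single_left] using h

/-- The gradient of `V` is Lipschitz with constant `M` under the Hessian bound. -/
lemma gradV_lipschitz {n : ℕ} (V : Eu n → ℝ) (hV : ContDiff ℝ (⊤ : ℕ∞) V)
    (M : ℝ) (hM1 : 1 ≤ M)
    (hM : ∀ (x : Eu n) (i j : Fin n), |d2V V x i j| ≤ (M - 1) / (n ^ 2 : ℝ)) :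
    ∀ a b : Eu n, ‖gradV V a - gradV V b‖ ≤ M * ‖a - b‖ := by
  intro a b
  rcases Nat.eq_zero_or_pos n with hn | hn
  · subst hn
    have : gradV V a - gradV V b = 0 := Subsingleton.elim _ _
    rw [this, norm_zero]
    positivity
  have hn1 : (1 : ℝ) ≤ (n : ℝ) := by exact_mod_cast hn
  have hnpos : (0 : ℝ) < (n : ℝ) := by linarith
  set E : Fin n → Eu n := fun i => EuclideanSpace.single i (1 : ℝ) with hE
  set f : Fin n → Eu n → ℝ := fun i z => fderiv ℝ V z (E i) with hf
  -- differentiability of the partial derivatives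
  have hd : ∀ i, Differentiable ℝ (f i) := by
    intro i
    have h1 : ContDiff ℝ 1 (fderiv ℝ V) := hV.fderiv_right (WithTop.coe_le_coe.2 le_top)
    exact fun z => ((h1.differentiable one_ne_zero) z).clm_apply (differentiableAt_const _)
  -- bound on the derivative of each partial derivative
  have hfd : ∀ (i : Fin n) (x : Eu n), ‖fderiv ℝ (f i) x‖ ≤ (M - 1) / n := by
    intro i x
    have hC : (0 : ℝ) ≤ (M - 1) / n := by
      apply div_nonneg <;> linarith
    apply ContinuousLinearMap.opNorm_le_bound _ hC
    intro u
    have hu : ∑ j, (u j) • E j = u := by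
      have h := (EuclideanSpace.basisFun (Fin n) ℝ).sum_repr' u
      simpa [hE, EuclideanSpace.basisFun_apply, EuclideanSpace.inner_single_left] using h
    have hmap : fderiv ℝ (f i) x u = ∑ j, (u j) * d2V V x j i := by
      conv_lhs => rw [← hu]
      rw [map_sum]
      refine Finset.sum_congr rfl fun j _ => ?_
      rw [(fderiv ℝ (f i) x).map_smul]
      rfl
    rw [hmap]
    calc |∑ j, (u j) * d2V V x j i| ≤ ∑ j, |(u j) * d2V V x j i| :=
          Finset.abs_sum_le_sum_abs _ _
      _ ≤ ∑ _j : Fin n, ‖u‖ * ((M - 1) / (n ^ 2 : ℝ)) := by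
          refine Finset.sum_le_sum fun j _ => ?_
          rw [abs_mul]
          exact mul_le_mul (Eu.coord_le_norm u j) (hM x j i) (abs_nonneg _) (norm_nonneg _)
      _ = (M - 1) / n * ‖u‖ := by
          rw [Finset.sum_const, Finset.card_fin, nsmul_eq_mul]
          field_simp
  -- each partial derivative is Lipschitz
  have hlip : ∀ (i : Fin n), |f i a - f i b| ≤ (M - 1) / n * ‖a - b‖ := by
    intro i
    have := Convex.norm_image_sub_le_of_norm_fderiv_le
      (f := f i) (C := (M - 1) / n) (s := Set.univ)
      (fun x _ => (hd i).differentiableAt) (fun x _ => hfd i x)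
      convex_univ (Set.mem_univ b) (Set.mem_univ a)
    simpa [Real.norm_eq_abs] using this
  -- assemble the Euclidean norm bound
  have hcoord : ∀ i : Fin n, (gradV V a - gradV V b) i = f i a - f i b := by
    intro i
    simp [gradV, hf, hE]
  have hMD : (0 : ℝ) ≤ M * ‖a - b‖ := by positivity
  have hsq : ‖gradV V a - gradV V b‖ ^ 2 ≤ (M * ‖a - b‖) ^ 2 := by
    rw [EuclideanSpace.norm_eq]
    rw [Real.sq_sqrt (by positivity)]
    calc ∑ i, ‖(gradV V a - gradV V b) i‖ ^ 2
        ≤ ∑ _i : Fin n, ((M - 1) / n * ‖a - b‖) ^ 2 := by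
          refine Finset.sum_le_sum fun i _ => ?_
          rw [hcoord i, Real.norm_eq_abs]
          have h1 := hlip i
          have h2 : (0 : ℝ) ≤ (M - 1) / n * ‖a - b‖ :=
            le_trans (abs_nonneg _) h1
          nlinarith [abs_nonneg (f i a - f i b)]
      _ = n * ((M - 1) / n * ‖a - b‖) ^ 2 := by
          rw [Finset.sum_const, Finset.card_fin, nsmul_eq_mul]
      _ ≤ (M * ‖a - b‖) ^ 2 := by
          have h3 : ((M - 1) / n) ^ 2 * (n : ℝ) ≤ M ^ 2 := by
            rw [div_pow]
            rw [div_mul_eq_mul_div, div_le_iff₀ (by positivity)]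
            have : (n : ℝ) ≤ (n : ℝ) ^ 2 := by nlinarith
            nlinarith [sq_nonneg (M - 1)]
          nlinarith [sq_nonneg ‖a - b‖]
  calc ‖gradV V a - gradV V b‖ = √(‖gradV V a - gradV V b‖ ^ 2) := by
        rw [Real.sqrt_sq (norm_nonneg _)]
    _ ≤ √((M * ‖a - b‖) ^ 2) := Real.sqrt_le_sqrt hsq
    _ = M * ‖a - b‖ := Real.sqrt_sq hMD

/-- Key quantitative estimate for a linear-growth ODE system on `[0, T]`. -/
lemma key_est {F : Type*} [NormedAddCommGroup F] [NormedSpace ℝ F]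
    (w v v' : ℝ → F) (M T : ℝ) (hM : 1 ≤ M) (hT : 0 ≤ T)
    (hw : ∀ s ∈ Set.Icc (0:ℝ) T, HasDerivAt w (v s) s)
    (hv : ∀ s ∈ Set.Icc (0:ℝ) T, HasDerivAt v (v' s) s)
    (hb : ∀ s ∈ Set.Icc (0:ℝ) T, ‖v' s‖ ≤ M * ‖w s‖) :
    ‖w 0‖ - T * ‖v 0‖ - M * Real.exp (M * T) * T ^ 2 * (‖w 0‖ + ‖v 0‖) ≤ ‖w T‖ := by
  have hM0 : (0 : ℝ) ≤ M := le_trans zero_le_one hM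
  set u : ℝ → F × F := fun s => (w s, v s) with hudef
  have hu' : ∀ s ∈ Set.Icc (0:ℝ) T, HasDerivAt u (v s, v' s) s := fun s hs =>
    HasDerivAt.prodMk (hw s hs) (hv s hs)
  -- Step 1: Gronwall bound on the pair
  have step1 : ∀ s ∈ Set.Icc (0:ℝ) T, ‖u s‖ ≤ ‖u 0‖ * Real.exp (M * s) := by
    intro s hs
    have h := norm_le_gronwallBound_of_norm_deriv_right_le
      (f := u) (f' := fun r => (v r, v' r)) (δ := ‖u 0‖) (K := M) (ε := 0) (a := 0) (b := T)
      (fun r hr => (hu' r hr).continuousAt.continuousWithinAt)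
      (fun r hr => (hu' r (Set.mem_Icc_of_Ico hr)).hasDerivWithinAt)
      le_rfl ?_ s hs
    · rwa [sub_zero, gronwallBound_ε0] at h
    · intro r hr
      have hr' := Set.mem_Icc_of_Ico hr
      have h1 : ‖v r‖ ≤ ‖u r‖ := le_max_right _ _
      have hw1 : ‖w r‖ ≤ ‖u r‖ := le_max_left _ _
      have h2 : ‖v' r‖ ≤ M * ‖u r‖ :=
        le_trans (hb r hr') (by nlinarith [norm_nonneg (u r)])
      have h3 : ‖u r‖ ≤ M * ‖u r‖ := by nlinarith [norm_nonneg (u r)]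
      have hnorm : ‖((v r, v' r) : F × F)‖ = max ‖v r‖ ‖v' r‖ := rfl
      rw [hnorm, add_zero]
      exact max_le (le_trans h1 h3) h2
  set C : ℝ := ‖u 0‖ * Real.exp (M * T) with hCdef
  have hC0 : 0 ≤ C := by positivity
  have hwC : ∀ s ∈ Set.Icc (0:ℝ) T, ‖w s‖ ≤ C := by
    intro s hs
    have h1 : ‖w s‖ ≤ ‖u s‖ := le_max_left _ _
    have h2 := step1 s hs
    have h3 : Real.exp (M * s) ≤ Real.exp (M * T) :=
      Real.exp_le_exp.2 (by nlinarith [hs.2])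
    have h4 : ‖u 0‖ * Real.exp (M * s) ≤ C := by
      rw [hCdef]; nlinarith [norm_nonneg (u 0)]
    linarith
  -- Step 2: bound on ‖v s - v 0‖
  have step2 : ∀ s ∈ Set.Icc (0:ℝ) T, ‖v s - v 0‖ ≤ M * C * s := by
    intro s hs
    have h := norm_le_gronwallBound_of_norm_deriv_right_le
      (f := fun r => v r - v 0) (f' := v') (δ := 0) (K := 0) (ε := M * C) (a := 0) (b := T)
      (fun r hr => ((hv r hr).sub_const (v 0)).continuousAt.continuousWithinAt)
      (fun r hr => ((hv r (Set.mem_Icc_of_Ico hr)).sub_const (v 0)).hasDerivWithinAt)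
      (by simp) ?_ s hs
    · rw [gronwallBound_K0, sub_zero] at h
      simpa using h
    · intro r hr
      have hr' := Set.mem_Icc_of_Ico hr
      have h1 := hb r hr'
      have h2 := hwC r hr'
      have : M * ‖w r‖ ≤ M * C := by nlinarith
      simp only [zero_mul, zero_add]
      linarith
  -- Step 3: bound on ‖w T - w 0 - T • v 0‖
  have hsmul : ∀ s : ℝ, HasDerivAt (fun r : ℝ => r • v 0) (v 0) s := by
    intro s
    have := (hasDerivAt_id s).smul_const (v 0)
    simpa using this
  have step3 : ‖w T - w 0 - T • v 0‖ ≤ M * C * T * T := by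
    have h := norm_le_gronwallBound_of_norm_deriv_right_le
      (f := fun r => w r - w 0 - r • v 0) (f' := fun r => v r - v 0)
      (δ := 0) (K := 0) (ε := M * C * T) (a := 0) (b := T)
      (fun r hr => (((hw r hr).sub_const (w 0)).sub (hsmul r)).continuousAt.continuousWithinAt)
      (fun r hr =>
        (((hw r (Set.mem_Icc_of_Ico hr)).sub_const (w 0)).sub (hsmul r)).hasDerivWithinAt)
      (by simp) ?_ T (Set.right_mem_Icc.2 hT)
    · rw [gronwallBound_K0, sub_zero] at h
      simpa using h
    · intro r hr
      have hr' := Set.mem_Icc_of_Ico hr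
      have h1 := step2 r hr'
      have h2 : M * C * r ≤ M * C * T := by nlinarith [hr'.1, hr'.2, mul_nonneg hM0 hC0]
      simp only [zero_mul, zero_add]
      linarith
  -- Step 4: conclusion
  have hCle : C ≤ (‖w 0‖ + ‖v 0‖) * Real.exp (M * T) := by
    have h1 : ‖u 0‖ ≤ ‖w 0‖ + ‖v 0‖ := by
      have hw0 : ‖u 0‖ = max ‖w 0‖ ‖v 0‖ := rfl
      rw [hw0]
      exact max_le (by linarith [norm_nonneg (v 0)]) (by linarith [norm_nonneg (w 0)])
    have h2 : (0:ℝ) < Real.exp (M * T) := Real.exp_pos _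
    rw [hCdef]
    nlinarith
  have htri : ‖w 0 + T • v 0‖ - ‖w T - w 0 - T • v 0‖ ≤ ‖w T‖ := by
    have h : ‖w 0 + T • v 0‖ ≤ ‖w T‖ + ‖w T - w 0 - T • v 0‖ := by
      calc ‖w 0 + T • v 0‖ = ‖w T - (w T - w 0 - T • v 0)‖ := by
            congr 1; abel
        _ ≤ ‖w T‖ + ‖w T - w 0 - T • v 0‖ := norm_sub_le _ _
    linarith
  have htri2 : ‖w 0‖ - T * ‖v 0‖ ≤ ‖w 0 + T • v 0‖ := by
    have h : ‖w 0‖ ≤ ‖w 0 + T • v 0‖ + ‖T • v 0‖ := by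
      calc ‖w 0‖ = ‖(w 0 + T • v 0) - T • v 0‖ := by congr 1; abel
        _ ≤ ‖w 0 + T • v 0‖ + ‖T • v 0‖ := norm_sub_le _ _
    have h2 : ‖T • v 0‖ = T * ‖v 0‖ := by
      rw [norm_smul, Real.norm_eq_abs, abs_of_nonneg hT]
    linarith
  have hfin : M * C * T * T ≤ M * Real.exp (M * T) * T ^ 2 * (‖w 0‖ + ‖v 0‖) := by
    have h2 : (0:ℝ) < Real.exp (M * T) := Real.exp_pos _
    nlinarith [mul_nonneg hT hT, mul_nonneg hM0 (mul_nonneg hT hT)]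
  linarith

/-- on `|t| < T₁` with `2M^{3/2}e^{MT₁}T₁ < 1/2`, `T₁ < 1/3`,
the spatial components of the flow separate:
`|x(t;x,ξ) − x(t;z,η)| ≥ (1/6)(5|x−z| − 3|ξ−η|)`. -/
theorem flow_space_separation {n : ℕ} (V : Eu n → ℝ) (hV : ContDiff ℝ (⊤ : ℕ∞) V)
    (xtraj ξtraj : ℝ → Eu n → Eu n → Eu n)
    (hx0 : ∀ x ξ, xtraj 0 x ξ = x) (hξ0 : ∀ x ξ, ξtraj 0 x ξ = ξ)
    (hode : ∀ t x ξ,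
      HasDerivAt (fun s => xtraj s x ξ) (ξtraj t x ξ) t ∧
      HasDerivAt (fun s => ξtraj s x ξ) (-(gradV V (xtraj t x ξ))) t)
    (M : ℝ) (hM1 : 1 ≤ M)
    (hM : ∀ (x : Eu n) (i j : Fin n), |d2V V x i j| ≤ (M - 1) / (n ^ 2 : ℝ))
    (T₁ : ℝ) (hT₁pos : 0 < T₁)
    (hT₁ : 2 * M ^ ((3 : ℝ) / 2) * Real.exp (M * T₁) * T₁ < 1 / 2)
    (hT₁' : T₁ < 1 / 3) :
    ∀ (t : ℝ), |t| < T₁ → ∀ (x z ξ η : Eu n),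
      ‖xtraj t x ξ - xtraj t z η‖ ≥ (1 / 6) * (5 * ‖x - z‖ - 3 * ‖ξ - η‖) := by
  have hM0 : (0 : ℝ) ≤ M := le_trans zero_le_one hM1
  have hlip := gradV_lipschitz V hV M hM1 hM
  -- numeric bound: M * exp(M*T₁) * T₁ < 1/4
  have hexp : (0:ℝ) < Real.exp (M * T₁) := Real.exp_pos _
  have hrpow : M ≤ M ^ ((3:ℝ)/2) := by
    calc M = M ^ (1:ℝ) := (Real.rpow_one M).symm
      _ ≤ M ^ ((3:ℝ)/2) := Real.rpow_le_rpow_of_exponent_le hM1 (by norm_num)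
  have hkey : M * Real.exp (M * T₁) * T₁ < 1 / 4 := by nlinarith
  intro t ht x z ξ η
  set T : ℝ := |t| with hTdef
  have hT0 : 0 ≤ T := abs_nonneg t
  have hTT₁ : T < T₁ := ht
  -- Reduce to the key estimate applied either forward or backward in time
  have main : ‖x - z‖ - T * ‖ξ - η‖ - M * Real.exp (M * T) * T ^ 2 * (‖x - z‖ + ‖ξ - η‖)
      ≤ ‖xtraj t x ξ - xtraj t z η‖ := by
    rcases le_or_gt 0 t with htpos | htneg
    · -- forward in time : T = t
      have hTt : T = t := abs_of_nonneg htpos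
      set w : ℝ → Eu n := fun s => xtraj s x ξ - xtraj s z η with hwdef
      set v : ℝ → Eu n := fun s => ξtraj s x ξ - ξtraj s z η with hvdef
      set v' : ℝ → Eu n :=
        fun s => -(gradV V (xtraj s x ξ)) - -(gradV V (xtraj s z η)) with hv'def
      have hw : ∀ s ∈ Set.Icc (0:ℝ) T, HasDerivAt w (v s) s := fun s _ =>
        ((hode s x ξ).1).sub ((hode s z η).1)
      have hv : ∀ s ∈ Set.Icc (0:ℝ) T, HasDerivAt v (v' s) s := fun s _ =>
        ((hode s x ξ).2).sub ((hode s z η).2)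
      have hb : ∀ s ∈ Set.Icc (0:ℝ) T, ‖v' s‖ ≤ M * ‖w s‖ := by
        intro s _
        have h1 : v' s = -(gradV V (xtraj s x ξ) - gradV V (xtraj s z η)) := by
          rw [hv'def]; abel_nf
        rw [h1, norm_neg]
        exact hlip _ _
      have h := key_est w v v' M T hM1 hT0 hw hv hb
      have hw0 : w 0 = x - z := by rw [hwdef]; simp [hx0]
      have hv0 : v 0 = ξ - η := by rw [hvdef]; simp [hξ0]
      have hwT : w T = xtraj t x ξ - xtraj t z η := by rw [hwdef, hTt]
      rw [hw0, hv0, hwT] at h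
      exact h
    · -- backward in time : T = -t
      have hTt : T = -t := abs_of_neg htneg
      set w : ℝ → Eu n := fun s => xtraj (-s) x ξ - xtraj (-s) z η with hwdef
      set v : ℝ → Eu n := fun s => -(ξtraj (-s) x ξ - ξtraj (-s) z η) with hvdef
      set v' : ℝ → Eu n :=
        fun s => -(gradV V (xtraj (-s) x ξ)) - -(gradV V (xtraj (-s) z η)) with hv'def
      have hneg : ∀ (s : ℝ) (F : ℝ → Eu n) (D : Eu n),
          HasDerivAt F D (-s) → HasDerivAt (fun r => F (-r)) (-D) s := by
        intro s F D hF
        have h2 : HasDerivAt (fun r : ℝ => -r) (-1 : ℝ) s := by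
          exact (hasDerivAt_id s).neg
        have := HasDerivAt.scomp s hF h2
        rw [neg_one_smul] at this
        exact this
      have hw : ∀ s ∈ Set.Icc (0:ℝ) T, HasDerivAt w (v s) s := by
        intro s _
        have h1 := hneg s (fun r => xtraj r x ξ) _ (hode (-s) x ξ).1
        have h2 := hneg s (fun r => xtraj r z η) _ (hode (-s) z η).1
        have h3 := h1.sub h2
        rw [hwdef, hvdef]
        exact h3.congr_deriv (by beta_reduce; abel)
      have hv : ∀ s ∈ Set.Icc (0:ℝ) T, HasDerivAt v (v' s) s := by
        intro s _
        have h1 := hneg s (fun r => ξtraj r x ξ) _ (hode (-s) x ξ).2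
        have h2 := hneg s (fun r => ξtraj r z η) _ (hode (-s) z η).2
        have h3 := (h1.sub h2).neg
        rw [hvdef, hv'def]
        exact h3.congr_deriv (by beta_reduce; abel)
      have hb : ∀ s ∈ Set.Icc (0:ℝ) T, ‖v' s‖ ≤ M * ‖w s‖ := by
        intro s _
        have h1 : v' s = -(gradV V (xtraj (-s) x ξ) - gradV V (xtraj (-s) z η)) := by
          rw [hv'def]; abel_nf
        rw [h1, norm_neg]
        exact hlip _ _
      have h := key_est w v v' M T hM1 hT0 hw hv hb
      have hw0 : w 0 = x - z := by rw [hwdef]; simp [hx0]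
      have hv0 : ‖v 0‖ = ‖ξ - η‖ := by rw [hvdef]; simp [hξ0, norm_sub_rev]
      have hwT : w T = xtraj t x ξ - xtraj t z η := by
        rw [hwdef, hTt]; simp
      rw [hw0] at h
      rw [hv0] at h
      rw [hwT] at h
      exact h
  -- numeric conclusion
  have hEmono : Real.exp (M * T) ≤ Real.exp (M * T₁) :=
    Real.exp_le_exp.2 (by nlinarith)
  have herr : M * Real.exp (M * T) * T ^ 2 ≤ 1 / 12 := by
    have h1 : M * Real.exp (M * T) * T ≤ M * Real.exp (M * T₁) * T₁ := by
      have := hTT₁.le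
      gcongr
    have h2 : M * Real.exp (M * T) * T ^ 2 ≤ (1/4) * T := by
      have hE0 : (0:ℝ) < Real.exp (M * T) := Real.exp_pos _
      nlinarith
    nlinarith
  have hTb : T * ‖ξ - η‖ ≤ (1/3) * ‖ξ - η‖ := by
    have := norm_nonneg (ξ - η)
    nlinarith
  have herr2 : M * Real.exp (M * T) * T ^ 2 * (‖x - z‖ + ‖ξ - η‖)
      ≤ (1/12) * (‖x - z‖ + ‖ξ - η‖) := by
    have h1 : (0:ℝ) ≤ ‖x - z‖ + ‖ξ - η‖ := by positivity
    nlinarith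
  have h1 := norm_nonneg (x - z)
  have h2 := norm_nonneg (ξ - η)
  linarith

end
end

section
/- Let V ∈ C^∞(ℝⁿ;ℝ) with bounded derivatives of order ≥ 2 and let x(t;x,ξ) be the spatial component of the Hamiltonian flow of ẋ = ξ, ξ̇ = −∇V(x). Then there exists T₂ > 0 such that for all 0 < |t| ≤ T₂ and all (x,ξ) ∈ ℝ²ⁿ, the Jacobian determinant of the map ξ ↦ x(t; x, ξ/t) satisfies 1/2 ≤ |det(∂x(t;x,ξ/t)/∂ξ)| ≤ 2. -/
open MeasureTheory

noncomputable section

open Set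

set_option maxHeartbeats 1000000

theorem gradV_eq {n : ℕ} (V : Eu n → ℝ) (y : Eu n) :
    gradV V y = (InnerProductSpace.toDual ℝ (Eu n)).symm (fderiv ℝ V y) := by
  apply (InnerProductSpace.toDual ℝ (Eu n)).injective
  simp only [LinearIsometryEquiv.apply_symm_apply]
  ext v
  rw [InnerProductSpace.toDual_apply_apply]
  have hv : v = ∑ i, v i • EuclideanSpace.single i (1:ℝ) := by
    ext j
    rw [WithLp.ofLp_sum, Finset.sum_apply]
    simp [EuclideanSpace.single_apply]
  calc inner ℝ (gradV V y) v = ∑ i, (gradV V y) i * v i := by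
        simp [PiLp.inner_apply, RCLike.inner_apply, starRingEnd_apply, mul_comm]
    _ = ∑ i, v i * fderiv ℝ V y (EuclideanSpace.single i 1) := by
        refine Finset.sum_congr rfl fun i _ => ?_
        rw [mul_comm]; rfl
    _ = fderiv ℝ V y v := by
        conv_rhs => rw [hv]
        rw [map_sum]
        simp


def Jr (n : ℕ) : (Eu n →L[ℝ] ℝ) →L[ℝ] Eu n :=
  ((InnerProductSpace.toDual ℝ (Eu n)).symm.toContinuousLinearEquiv :
    (Eu n →L[ℝ] ℝ) ≃L[ℝ] Eu n).toContinuousLinearMap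
theorem Jr_apply {n : ℕ} (L : Eu n →L[ℝ] ℝ) :
    Jr n L = (InnerProductSpace.toDual ℝ (Eu n)).symm L := rfl
theorem Jr_norm {n : ℕ} (L : Eu n →L[ℝ] ℝ) : ‖Jr n L‖ = ‖L‖ := by
  rw [Jr_apply, LinearIsometryEquiv.norm_map]
def Hs {n : ℕ} (V : Eu n → ℝ) (y : Eu n) : Eu n →L[ℝ] Eu n :=
  (Jr n).comp (fderiv ℝ (fderiv ℝ V) y)
theorem gradV_eq' {n : ℕ} {V : Eu n → ℝ} : gradV V = fun y => Jr n (fderiv ℝ V y) := by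
  funext y; rw [gradV_eq, Jr_apply]

section lemmas
variable {n : ℕ} {V : Eu n → ℝ} (hV : ContDiff ℝ (⊤ : ℕ∞) V)
include hV

theorem hs_cont : Continuous (Hs V) :=
  continuous_const.clm_comp ((hV.fderiv_right (m := 1) (by exact WithTop.coe_le_coe.mpr le_top)).continuous_fderiv one_ne_zero)

theorem grad_lip {C₂ : ℝ} (hC : ∀ y, ‖iteratedFDeriv ℝ 2 V y‖ ≤ C₂) (a b : Eu n) :
    ‖gradV V b - gradV V a‖ ≤ C₂ * ‖b - a‖ := by
  rw [gradV_eq']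
  rw [← map_sub, Jr_norm]
  refine Convex.norm_image_sub_le_of_norm_fderiv_le
    (fun y _ => (hV.fderiv_right (m := 1) (by exact WithTop.coe_le_coe.mpr le_top)).differentiable one_ne_zero y)
    (fun y _ => ?_) convex_univ trivial trivial
  have := norm_iteratedFDeriv_fderiv (𝕜 := ℝ) (f := fderiv ℝ V) (x := y) (n := 0)
  rw [norm_iteratedFDeriv_zero] at this
  rw [this, norm_iteratedFDeriv_fderiv]
  exact hC y

theorem hess_lip {C₃ : ℝ} (hC : ∀ y, ‖iteratedFDeriv ℝ 3 V y‖ ≤ C₃) (a b : Eu n) :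
    ‖fderiv ℝ (fderiv ℝ V) b - fderiv ℝ (fderiv ℝ V) a‖ ≤ C₃ * ‖b - a‖ := by
  refine Convex.norm_image_sub_le_of_norm_fderiv_le
    (fun y _ => ((hV.fderiv_right (m := 2) (by exact WithTop.coe_le_coe.mpr le_top)).fderiv_right (m := 1) (by norm_num)).differentiable one_ne_zero y)
    (fun y _ => ?_) convex_univ trivial trivial
  have h0 := norm_iteratedFDeriv_fderiv (𝕜 := ℝ)
    (f := fderiv ℝ (fderiv ℝ V)) (x := y) (n := 0)
  rw [norm_iteratedFDeriv_zero] at h0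
  rw [h0, norm_iteratedFDeriv_fderiv, norm_iteratedFDeriv_fderiv]
  exact hC y

theorem grad_taylor {C₃ : ℝ} (hC : ∀ y, ‖iteratedFDeriv ℝ 3 V y‖ ≤ C₃) (a b : Eu n) :
    ‖gradV V b - gradV V a - Hs V a (b - a)‖ ≤ C₃ * ‖b - a‖ ^ 2 := by
  have key : ‖fderiv ℝ V b - fderiv ℝ V a - fderiv ℝ (fderiv ℝ V) a (b - a)‖
      ≤ (C₃ * ‖b - a‖) * ‖b - a‖ := by
    refine Convex.norm_image_sub_le_of_norm_fderiv_le'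
      (fun y _ => (hV.fderiv_right (m := 1) (by exact WithTop.coe_le_coe.mpr le_top)).differentiable one_ne_zero y)
      (fun y hy => ?_) (convex_closedBall a ‖b - a‖)
      (Metric.mem_closedBall_self (norm_nonneg _)) ?_
    · calc ‖fderiv ℝ (fderiv ℝ V) y - fderiv ℝ (fderiv ℝ V) a‖ ≤ C₃ * ‖y - a‖ :=
            hess_lip hV hC a y
        _ ≤ C₃ * ‖b - a‖ := by
            have hC0 : 0 ≤ C₃ := le_trans (norm_nonneg _) (hC a)
            have : ‖y - a‖ ≤ ‖b - a‖ := by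
              rw [← dist_eq_norm, ← dist_eq_norm]; exact Metric.mem_closedBall.mp hy
            nlinarith [norm_nonneg (y - a)]
    · rw [Metric.mem_closedBall, dist_eq_norm]
  have heq : gradV V b - gradV V a - Hs V a (b - a)
      = Jr n (fderiv ℝ V b - fderiv ℝ V a - fderiv ℝ (fderiv ℝ V) a (b - a)) := by
    rw [gradV_eq']
    simp [Hs, map_sub]
  rw [heq, Jr_norm]
  calc _ ≤ (C₃ * ‖b - a‖) * ‖b - a‖ := key
    _ = C₃ * ‖b - a‖ ^ 2 := by ring
end lemmas

theorem hs_norm {n : ℕ} {V : Eu n → ℝ} {C₂ : ℝ}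
    (hC : ∀ y, ‖iteratedFDeriv ℝ 2 V y‖ ≤ C₂) (y : Eu n) :
    ‖Hs V y‖ ≤ C₂ := by
  refine le_trans ((Jr n).opNorm_comp_le _) ?_
  have h1 : ‖Jr n‖ ≤ 1 := by
    refine ContinuousLinearMap.opNorm_le_bound _ zero_le_one fun L => ?_
    rw [Jr_norm, one_mul]
  have h2 : ‖fderiv ℝ (fderiv ℝ V) y‖ ≤ C₂ := by
    have := norm_iteratedFDeriv_fderiv (𝕜 := ℝ) (f := fderiv ℝ V) (x := y) (n := 0)
    rw [norm_iteratedFDeriv_zero] at this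
    rw [this, norm_iteratedFDeriv_fderiv]
    exact hC y
  calc ‖Jr n‖ * ‖fderiv ℝ (fderiv ℝ V) y‖ ≤ 1 * C₂ :=
        mul_le_mul h1 h2 (by positivity) zero_le_one
    _ = C₂ := one_mul _



theorem variational_exists {n : ℕ} (H : ℝ → Eu n →L[ℝ] Eu n)
    (hHc : Continuous H) {C₂ : ℝ} (hC₂ : 0 ≤ C₂) (hHb : ∀ s, ‖H s‖ ≤ C₂)
    {T : ℝ} (hT : 0 < T) (hTC : T * (2 + C₂) ≤ 1) :
    ∃ W U : ℝ → Eu n →L[ℝ] Eu n, W 0 = 0 ∧ U 0 = 1 ∧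
      ∀ s ∈ Icc (0:ℝ) T, HasDerivWithinAt W (U s) (Icc 0 T) s ∧
        HasDerivWithinAt U (-((H s).comp (W s))) (Icc 0 T) s := by
  set v : ℝ → ((Eu n →L[ℝ] Eu n) × (Eu n →L[ℝ] Eu n)) →
      ((Eu n →L[ℝ] Eu n) × (Eu n →L[ℝ] Eu n)) := fun s p => (p.2, -((H s).comp p.1)) with hv
  have hK : (0:ℝ) ≤ 1 + C₂ := by linarith
  have hL : (0:ℝ) ≤ 2 + C₂ := by linarith
  have hpl : IsPicardLindelof v (tmin := 0) (tmax := T) ⟨0, ⟨le_refl _, hT.le⟩⟩ ((0, 1))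
      1 0 ⟨2 + C₂, hL⟩ ⟨1 + C₂, hK⟩ := by
    constructor
    · intro t _
      refine LipschitzWith.lipschitzOnWith (LipschitzWith.of_dist_le_mul fun p q => ?_)
      rw [dist_eq_norm, dist_eq_norm]
      have heq : v t p - v t q = (p.2 - q.2, -((H t).comp (p.1 - q.1))) := by
        rw [hv]
        simp only [Prod.mk_sub_mk]
        congr 1
        rw [ContinuousLinearMap.comp_sub]
        abel
      rw [heq, Prod.norm_def]
      have h1 := norm_snd_le (p - q)
      rw [Prod.snd_sub] at h1
      have h1' := norm_fst_le (p - q)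
      rw [Prod.fst_sub] at h1'
      have h2 : ‖-((H t).comp (p.1 - q.1))‖ ≤ C₂ * ‖p - q‖ := by
        rw [norm_neg]
        calc ‖(H t).comp (p.1 - q.1)‖ ≤ ‖H t‖ * ‖p.1 - q.1‖ :=
              ContinuousLinearMap.opNorm_comp_le _ _
          _ ≤ C₂ * ‖p - q‖ := mul_le_mul (hHb t) h1' (norm_nonneg _) hC₂
      have hpq : (0:ℝ) ≤ ‖p - q‖ := norm_nonneg _
      simp only [NNReal.coe_mk]
      change max _ _ ≤ (1 + C₂) * ‖p - q‖
      exact max_le (by nlinarith) (by nlinarith)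
    · intro p _
      exact (continuous_const.prodMk ((hHc.clm_comp continuous_const).neg)).continuousOn
    · intro t _ p hp
      rw [Metric.mem_closedBall, dist_eq_norm, NNReal.coe_one] at hp
      change ‖v t p‖ ≤ 2 + C₂
      have e1 := norm_fst_le (p - ((0:Eu n →L[ℝ] Eu n), (1:Eu n →L[ℝ] Eu n)))
      rw [Prod.fst_sub, sub_zero] at e1
      have e2 := norm_snd_le (p - ((0:Eu n →L[ℝ] Eu n), (1:Eu n →L[ℝ] Eu n)))
      rw [Prod.snd_sub] at e2
      have h1 : ‖p.1‖ ≤ 1 := e1.trans hp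
      have h2 : ‖p.2‖ ≤ 2 := by
        have hn1 : ‖(1 : Eu n →L[ℝ] Eu n)‖ ≤ 1 := ContinuousLinearMap.norm_id_le
        have := norm_sub_norm_le p.2 (1 : Eu n →L[ℝ] Eu n)
        have := e2.trans hp
        linarith
      rw [hv, Prod.norm_def]
      refine max_le (by linarith) ?_
      rw [norm_neg]
      calc ‖(H t).comp p.1‖ ≤ ‖H t‖ * ‖p.1‖ := ContinuousLinearMap.opNorm_comp_le _ _
        _ ≤ C₂ * 1 := mul_le_mul (hHb t) h1 (norm_nonneg _) hC₂
        _ ≤ 2 + C₂ := by linarith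
    · have hm : max (T - 0) (0 - 0) = T := by
        rw [sub_zero, sub_zero]; exact max_eq_left hT.le
      simp only [NNReal.coe_mk, NNReal.coe_one, NNReal.coe_zero, sub_zero]
      change (2 + C₂) * max T 0 ≤ 1
      rw [max_eq_left hT.le, mul_comm]; exact hTC
  obtain ⟨f, hf0, hfd⟩ := IsPicardLindelof.exists_eq_forall_mem_Icc_hasDerivWithinAt₀ hpl
  refine ⟨fun s => (f s).1, fun s => (f s).2, by simp [hf0], by simp [hf0], fun s hs => ?_⟩
  constructor
  · have h := (ContinuousLinearMap.fst ℝ (Eu n →L[ℝ] Eu n) (Eu n →L[ℝ] Eu n)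
      ).hasFDerivAt.comp_hasDerivWithinAt s (hfd s hs)
    exact h
  · have h := (ContinuousLinearMap.snd ℝ (Eu n →L[ℝ] Eu n) (Eu n →L[ℝ] Eu n)
      ).hasFDerivAt.comp_hasDerivWithinAt s (hfd s hs)
    exact h


theorem hderiv_Ici {X : Type*} [NormedAddCommGroup X] [NormedSpace ℝ X]
    {f : ℝ → X} {d : X} {s T : ℝ} (hs : s ∈ Ico 0 T)
    (h : HasDerivWithinAt f d (Icc 0 T) s) : HasDerivWithinAt f d (Ici s) s := by
  refine h.mono_of_mem_nhdsWithin ?_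
  have h1 : Ici s ∩ Iio T ∈ nhdsWithin s (Ici s) :=
    inter_mem_nhdsWithin _ (Iio_mem_nhds hs.2)
  exact Filter.mem_of_superset h1 (fun z hz => ⟨le_trans hs.1 hz.1, le_of_lt hz.2⟩)

theorem exp_sub_one_le_mul {y : ℝ} (hy : 0 ≤ y) :
    Real.exp y - 1 ≤ y * Real.exp y := by
  have h1 := Real.add_one_le_exp (-y)
  rw [Real.exp_neg] at h1
  have h2 := Real.exp_pos y
  have h3 : (Real.exp y)⁻¹ * Real.exp y = 1 := inv_mul_cancel₀ (ne_of_gt h2)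
  nlinarith [mul_le_mul_of_nonneg_right h1 h2.le]

section flow
variable {n : ℕ} {V : Eu n → ℝ} (hV : ContDiff ℝ (⊤ : ℕ∞) V)
  {C₂ : ℝ} (hC₂ : 0 ≤ C₂) (hC2 : ∀ y, ‖iteratedFDeriv ℝ 2 V y‖ ≤ C₂)
  (xtraj ξtraj : ℝ → Eu n → Eu n → Eu n)
  (hx0 : ∀ x ξ, xtraj 0 x ξ = x) (hξ0 : ∀ x ξ, ξtraj 0 x ξ = ξ)
  (hode : ∀ t x ξ,
      HasDerivAt (fun s => xtraj s x ξ) (ξtraj t x ξ) t ∧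
      HasDerivAt (fun s => ξtraj s x ξ) (-(gradV V (xtraj t x ξ))) t)

include hV hC₂ hC2 hx0 hξ0 hode in
theorem flow_lip (x ξ₀ h : Eu n) {t : ℝ} (ht : 0 ≤ t) :
    ∀ s ∈ Icc (0:ℝ) t,
      ‖xtraj s x (ξ₀ + h) - xtraj s x ξ₀‖ ≤ ‖h‖ * Real.exp ((1 + C₂) * s) := by
  set Δ : ℝ → Eu n × Eu n := fun s =>
    (xtraj s x (ξ₀ + h) - xtraj s x ξ₀, ξtraj s x (ξ₀ + h) - ξtraj s x ξ₀) with hΔ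
  set Δ' : ℝ → Eu n × Eu n := fun s =>
    (ξtraj s x (ξ₀ + h) - ξtraj s x ξ₀,
      -(gradV V (xtraj s x (ξ₀ + h))) - -(gradV V (xtraj s x ξ₀))) with hΔ'
  have hd : ∀ s, HasDerivAt Δ (Δ' s) s := fun s =>
    (((hode s x (ξ₀ + h)).1.sub (hode s x ξ₀).1).prodMk
      ((hode s x (ξ₀ + h)).2.sub (hode s x ξ₀).2))
  have hmain := norm_le_gronwallBound_of_norm_deriv_right_le (f := Δ) (f' := Δ')
    (δ := ‖h‖) (K := 1 + C₂) (ε := 0) (a := 0) (b := t)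
    (fun s _ => (hd s).continuousAt.continuousWithinAt)
    (fun s _ => (hd s).hasDerivWithinAt)
    (by
      have : Δ 0 = (0, h) := by simp [hΔ, hx0, hξ0]
      rw [this, Prod.norm_def]
      simp)
    (fun s _ => by
      rw [Prod.norm_def]
      have h1 : ‖ξtraj s x (ξ₀ + h) - ξtraj s x ξ₀‖ ≤ ‖Δ s‖ := norm_snd_le (Δ s)
      have h2 : ‖-(gradV V (xtraj s x (ξ₀ + h))) - -(gradV V (xtraj s x ξ₀))‖
          ≤ C₂ * ‖Δ s‖ := by
        have he : -(gradV V (xtraj s x (ξ₀ + h))) - -(gradV V (xtraj s x ξ₀))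
            = -(gradV V (xtraj s x (ξ₀ + h)) - gradV V (xtraj s x ξ₀)) := by abel
        rw [he, norm_neg]
        calc ‖gradV V (xtraj s x (ξ₀ + h)) - gradV V (xtraj s x ξ₀)‖
            ≤ C₂ * ‖xtraj s x (ξ₀ + h) - xtraj s x ξ₀‖ := grad_lip hV hC2 _ _
          _ ≤ C₂ * ‖Δ s‖ := by
              exact mul_le_mul_of_nonneg_left (norm_fst_le (Δ s)) hC₂
      have h0 : (0:ℝ) ≤ ‖Δ s‖ := norm_nonneg _
      exact max_le (by nlinarith) (by nlinarith))
  intro s hs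
  have := hmain s hs
  rw [sub_zero, gronwallBound_ε0] at this
  exact le_trans (le_trans (norm_fst_le (Δ s)) this) (le_refl _)
end flow


theorem clm_apply_deriv {n : ℕ} {W' : Eu n →L[ℝ] Eu n} {W : ℝ → Eu n →L[ℝ] Eu n}
    {s : Set ℝ} {t : ℝ} (hW : HasDerivWithinAt W W' s t) (h : Eu n) :
    HasDerivWithinAt (fun u => W u h) (W' h) s t := by
  have := hW.clm_apply (hasDerivWithinAt_const t s h)
  simpa using this

theorem W_bound {n : ℕ} (H : ℝ → Eu n →L[ℝ] Eu n) {C₂ : ℝ} (hC₂ : 0 ≤ C₂)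
    (hHb : ∀ s, ‖H s‖ ≤ C₂) {T : ℝ} (W U : ℝ → Eu n →L[ℝ] Eu n)
    (hW0 : W 0 = 0) (hU0 : U 0 = 1)
    (hWU : ∀ s ∈ Icc (0:ℝ) T, HasDerivWithinAt W (U s) (Icc 0 T) s ∧
      HasDerivWithinAt U (-((H s).comp (W s))) (Icc 0 T) s)
    {t : ℝ} (htm : t ∈ Icc (0:ℝ) T) :
    ‖W t - t • 1‖ ≤ C₂ * t ^ 2 * Real.exp ((1 + C₂) * t) := by
  set K := 1 + C₂ with hK
  have hKpos : 0 < K := by rw [hK]; linarith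
  set f : ℝ → (Eu n →L[ℝ] Eu n) × (Eu n →L[ℝ] Eu n) := fun s =>
    (W s - s • 1, U s - 1) with hf
  set f' : ℝ → (Eu n →L[ℝ] Eu n) × (Eu n →L[ℝ] Eu n) := fun s =>
    (U s - 1, -((H s).comp (W s))) with hf'
  have hfT : ∀ s ∈ Icc (0:ℝ) T, HasDerivWithinAt f (f' s) (Icc 0 T) s := by
    intro s hs
    have h1 : HasDerivWithinAt (fun u : ℝ => u • (1 : Eu n →L[ℝ] Eu n)) 1 (Icc 0 T) s := by
      have := ((hasDerivAt_id s).smul_const (1 : Eu n →L[ℝ] Eu n)).hasDerivWithinAt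
        (s := Icc (0:ℝ) T)
      simpa using this
    exact (((hWU s hs).1.sub h1).prodMk ((hWU s hs).2.sub_const 1))
  have hsub : Icc (0:ℝ) t ⊆ Icc (0:ℝ) T := Icc_subset_Icc le_rfl htm.2
  have hmain := norm_le_gronwallBound_of_norm_deriv_right_le (f := f) (f' := f')
    (δ := 0) (K := K) (ε := C₂ * t) (a := 0) (b := t)
    (fun s hs => ((hfT s (hsub hs)).continuousWithinAt).mono hsub)
    (fun s hs => hderiv_Ici ⟨hs.1, lt_of_lt_of_le hs.2 htm.2⟩
      (hfT s ⟨hs.1, le_trans hs.2.le htm.2⟩))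
    (by
      have : f 0 = 0 := by
        rw [hf]
        show (W 0 - (0:ℝ) • 1, U 0 - 1) = 0
        rw [hW0, hU0]
        refine Prod.ext ?_ ?_ <;> ext v <;> simp
      rw [this, norm_zero])
    (fun s hs => by
      have e1 : ‖U s - 1‖ ≤ ‖f s‖ := norm_snd_le (f s)
      have e2 : ‖(H s).comp (W s)‖ ≤ C₂ * ‖W s‖ := by
        calc ‖(H s).comp (W s)‖ ≤ ‖H s‖ * ‖W s‖ := ContinuousLinearMap.opNorm_comp_le _ _
          _ ≤ C₂ * ‖W s‖ := mul_le_mul_of_nonneg_right (hHb s) (norm_nonneg _)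
      have e3 : ‖W s‖ ≤ ‖f s‖ + t := by
        have e4 : ‖W s - s • 1‖ ≤ ‖f s‖ := norm_fst_le (f s)
        have e5 : ‖s • (1 : Eu n →L[ℝ] Eu n)‖ ≤ t := by
          calc ‖s • (1 : Eu n →L[ℝ] Eu n)‖ ≤ ‖s‖ * ‖(1 : Eu n →L[ℝ] Eu n)‖ :=
                ContinuousLinearMap.opNorm_smul_le _ _
            _ ≤ s * 1 := by
                rw [Real.norm_eq_abs, abs_of_nonneg hs.1]
                exact mul_le_mul_of_nonneg_left ContinuousLinearMap.norm_id_le hs.1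
            _ ≤ t := by rw [mul_one]; exact hs.2.le
        calc ‖W s‖ ≤ ‖W s - s • 1‖ + ‖s • (1 : Eu n →L[ℝ] Eu n)‖ := by
              have := norm_sub_norm_le (W s) (s • (1 : Eu n →L[ℝ] Eu n)); linarith
          _ ≤ ‖f s‖ + t := add_le_add e4 e5
      rw [Prod.norm_def]
      have h0 : (0:ℝ) ≤ ‖f s‖ := norm_nonneg _
      have h0t : (0:ℝ) ≤ t := le_trans hs.1 hs.2.le
      refine max_le ?_ ?_
      · show ‖U s - 1‖ ≤ _
        rw [hK]; nlinarith
      show ‖-((H s).comp (W s))‖ ≤ _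
      rw [norm_neg]
      calc ‖(H s).comp (W s)‖ ≤ C₂ * (‖f s‖ + t) := e2.trans
            (mul_le_mul_of_nonneg_left e3 hC₂)
        _ ≤ K * ‖f s‖ + C₂ * t := by rw [hK]; nlinarith)
  have hft := hmain t ⟨htm.1, le_rfl⟩
  rw [sub_zero, gronwallBound_of_K_ne_0 (ne_of_gt hKpos)] at hft
  have hfin : ‖f t‖ ≤ C₂ * t ^ 2 * Real.exp (K * t) := by
    have hy : 0 ≤ K * t := mul_nonneg hKpos.le htm.1
    have he := exp_sub_one_le_mul hy
    have hd : 0 ≤ C₂ * t / K := div_nonneg (mul_nonneg hC₂ htm.1) hKpos.le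
    calc ‖f t‖ ≤ 0 * Real.exp (K * t) + C₂ * t / K * (Real.exp (K * t) - 1) := hft
      _ ≤ 0 * Real.exp (K * t) + C₂ * t / K * (K * t * Real.exp (K * t)) := by
          exact add_le_add_right (mul_le_mul_of_nonneg_left he hd) _
      _ = C₂ * t ^ 2 * Real.exp (K * t) := by field_simp; ring
  exact le_trans (norm_fst_le (f t)) hfin


section flow
variable {n : ℕ} {V : Eu n → ℝ} (hV : ContDiff ℝ (⊤ : ℕ∞) V)
  {C₂ C₃ : ℝ} (hC₂ : 0 ≤ C₂) (hC2 : ∀ y, ‖iteratedFDeriv ℝ 2 V y‖ ≤ C₂)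
  (hC₃ : 0 ≤ C₃) (hC3 : ∀ y, ‖iteratedFDeriv ℝ 3 V y‖ ≤ C₃)
  (xtraj ξtraj : ℝ → Eu n → Eu n → Eu n)
  (hx0 : ∀ x ξ, xtraj 0 x ξ = x) (hξ0 : ∀ x ξ, ξtraj 0 x ξ = ξ)
  (hode : ∀ t x ξ,
      HasDerivAt (fun s => xtraj s x ξ) (ξtraj t x ξ) t ∧
      HasDerivAt (fun s => ξtraj s x ξ) (-(gradV V (xtraj t x ξ))) t)

include hV hC₂ hC2 hC₃ hC3 hx0 hξ0 hode in
theorem flow_deriv_bound (x ξ₀ : Eu n) {T : ℝ} (hT : 0 < T)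
    (W U : ℝ → Eu n →L[ℝ] Eu n) (hW0 : W 0 = 0) (hU0 : U 0 = 1)
    (hWU : ∀ s ∈ Icc (0:ℝ) T, HasDerivWithinAt W (U s) (Icc 0 T) s ∧
      HasDerivWithinAt U (-((Hs V (xtraj s x ξ₀)).comp (W s))) (Icc 0 T) s)
    {t : ℝ} (htm : t ∈ Icc (0:ℝ) T) (h : Eu n) :
    ‖xtraj t x (ξ₀ + h) - xtraj t x ξ₀ - W t h‖
      ≤ (C₃ * Real.exp ((1 + C₂) * T) ^ 3 * T) * ‖h‖ ^ 2 := by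
  set K := 1 + C₂ with hK
  have hKpos : 0 < K := by rw [hK]; linarith
  set ε₀ : ℝ := C₃ * ‖h‖ ^ 2 * Real.exp (K * T) ^ 2 with hε₀
  have hε₀nn : 0 ≤ ε₀ := by positivity
  set z : ℝ → Eu n × Eu n := fun s =>
    (xtraj s x (ξ₀ + h) - xtraj s x ξ₀ - W s h,
     ξtraj s x (ξ₀ + h) - ξtraj s x ξ₀ - U s h) with hz
  set z' : ℝ → Eu n × Eu n := fun s =>
    (ξtraj s x (ξ₀ + h) - ξtraj s x ξ₀ - U s h,
     (-(gradV V (xtraj s x (ξ₀ + h))) - -(gradV V (xtraj s x ξ₀)))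
       - (-((Hs V (xtraj s x ξ₀)).comp (W s))) h) with hz'
  have hzT : ∀ s ∈ Icc (0:ℝ) T, HasDerivWithinAt z (z' s) (Icc 0 T) s := by
    intro s hs
    exact ((((hode s x (ξ₀ + h)).1.sub (hode s x ξ₀).1).hasDerivWithinAt).sub
        (clm_apply_deriv (hWU s hs).1 h)).prodMk
      ((((hode s x (ξ₀ + h)).2.sub (hode s x ξ₀).2).hasDerivWithinAt).sub
        (clm_apply_deriv (hWU s hs).2 h))
  have hsub : Icc (0:ℝ) t ⊆ Icc (0:ℝ) T := Icc_subset_Icc le_rfl htm.2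
  have hlip := flow_lip hV hC₂ hC2 xtraj ξtraj hx0 hξ0 hode x ξ₀ h htm.1
  have hmain := norm_le_gronwallBound_of_norm_deriv_right_le (f := z) (f' := z')
    (δ := 0) (K := K) (ε := ε₀) (a := 0) (b := t)
    (fun s hs => ((hzT s (hsub hs)).continuousWithinAt).mono hsub)
    (fun s hs => hderiv_Ici ⟨hs.1, lt_of_lt_of_le hs.2 htm.2⟩
      (hzT s ⟨hs.1, le_trans hs.2.le htm.2⟩))
    (by
      have : z 0 = 0 := by
        rw [hz]
        show (xtraj 0 x (ξ₀ + h) - xtraj 0 x ξ₀ - W 0 h,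
          ξtraj 0 x (ξ₀ + h) - ξtraj 0 x ξ₀ - U 0 h) = 0
        rw [hx0, hx0, hξ0, hξ0, hW0, hU0]
        simp
      rw [this, norm_zero])
    (fun s hs => by
      have hsIcc : s ∈ Icc (0:ℝ) t := ⟨hs.1, hs.2.le⟩
      have hΔ : ‖xtraj s x (ξ₀ + h) - xtraj s x ξ₀‖ ≤ ‖h‖ * Real.exp (K * s) :=
        hlip s hsIcc
      have hsT : s ≤ T := le_trans hs.2.le htm.2
      have hexp : Real.exp (K * s) ≤ Real.exp (K * T) :=
        Real.exp_le_exp.mpr (mul_le_mul_of_nonneg_left hsT hKpos.le)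
      rw [Prod.norm_def]
      refine max_le ?_ ?_
      · show ‖ξtraj s x (ξ₀ + h) - ξtraj s x ξ₀ - U s h‖ ≤ _
        have := norm_snd_le (z s)
        have h0 : (0:ℝ) ≤ ‖z s‖ := norm_nonneg _
        rw [hK]
        nlinarith
      · show ‖(-(gradV V (xtraj s x (ξ₀ + h))) - -(gradV V (xtraj s x ξ₀)))
          - (-((Hs V (xtraj s x ξ₀)).comp (W s))) h‖ ≤ _
        have heq : (-(gradV V (xtraj s x (ξ₀ + h))) - -(gradV V (xtraj s x ξ₀)))
              - (-((Hs V (xtraj s x ξ₀)).comp (W s))) h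
            = -(gradV V (xtraj s x (ξ₀ + h)) - gradV V (xtraj s x ξ₀)
                - Hs V (xtraj s x ξ₀) (xtraj s x (ξ₀ + h) - xtraj s x ξ₀))
              - Hs V (xtraj s x ξ₀) ((z s).1) := by
          have h1 : Hs V (xtraj s x ξ₀) ((z s).1)
              = Hs V (xtraj s x ξ₀) (xtraj s x (ξ₀ + h) - xtraj s x ξ₀)
                - Hs V (xtraj s x ξ₀) (W s h) := by
            show Hs V (xtraj s x ξ₀) (xtraj s x (ξ₀ + h) - xtraj s x ξ₀ - W s h) = _
            rw [map_sub]
          rw [h1]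
          simp only [ContinuousLinearMap.neg_apply, ContinuousLinearMap.comp_apply]
          abel
        rw [heq]
        have h2 : ‖gradV V (xtraj s x (ξ₀ + h)) - gradV V (xtraj s x ξ₀)
            - Hs V (xtraj s x ξ₀) (xtraj s x (ξ₀ + h) - xtraj s x ξ₀)‖
            ≤ C₃ * ‖xtraj s x (ξ₀ + h) - xtraj s x ξ₀‖ ^ 2 := grad_taylor hV hC3 _ _
        have h3 : ‖Hs V (xtraj s x ξ₀) ((z s).1)‖ ≤ C₂ * ‖z s‖ := by
          calc ‖Hs V (xtraj s x ξ₀) ((z s).1)‖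
              ≤ ‖Hs V (xtraj s x ξ₀)‖ * ‖(z s).1‖ := ContinuousLinearMap.le_opNorm _ _
            _ ≤ C₂ * ‖z s‖ := mul_le_mul (hs_norm hC2 _) (norm_fst_le (z s))
                (norm_nonneg _) hC₂
        have h4 : C₃ * ‖xtraj s x (ξ₀ + h) - xtraj s x ξ₀‖ ^ 2 ≤ ε₀ := by
          rw [hε₀]
          have hnn : (0:ℝ) ≤ ‖xtraj s x (ξ₀ + h) - xtraj s x ξ₀‖ := norm_nonneg _
          have hrhs : (0:ℝ) ≤ ‖h‖ * Real.exp (K * s) := by positivity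
          have hsq : ‖xtraj s x (ξ₀ + h) - xtraj s x ξ₀‖ ^ 2
              ≤ (‖h‖ * Real.exp (K * s)) ^ 2 := by nlinarith
          have hsq2 : (‖h‖ * Real.exp (K * s)) ^ 2 ≤ ‖h‖ ^ 2 * Real.exp (K * T) ^ 2 := by
            have e1 : (0:ℝ) ≤ Real.exp (K * s) := (Real.exp_pos _).le
            have e3 : Real.exp (K * s) ^ 2 ≤ Real.exp (K * T) ^ 2 := by nlinarith
            calc (‖h‖ * Real.exp (K * s)) ^ 2 = ‖h‖ ^ 2 * Real.exp (K * s) ^ 2 := by ring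
              _ ≤ ‖h‖ ^ 2 * Real.exp (K * T) ^ 2 :=
                  mul_le_mul_of_nonneg_left e3 (sq_nonneg _)
          nlinarith
        calc ‖_ - _‖ ≤ ‖-(gradV V (xtraj s x (ξ₀ + h)) - gradV V (xtraj s x ξ₀)
                - Hs V (xtraj s x ξ₀) (xtraj s x (ξ₀ + h) - xtraj s x ξ₀))‖
              + ‖Hs V (xtraj s x ξ₀) ((z s).1)‖ := norm_sub_le _ _
          _ ≤ K * ‖z s‖ + ε₀ := by
              rw [norm_neg, hK]
              have h0 : (0:ℝ) ≤ ‖z s‖ := norm_nonneg _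
              nlinarith)
  have hzt := hmain t ⟨htm.1, le_rfl⟩
  rw [sub_zero, gronwallBound_of_K_ne_0 (ne_of_gt hKpos)] at hzt
  have hfin : ‖z t‖ ≤ (C₃ * Real.exp (K * T) ^ 3 * T) * ‖h‖ ^ 2 := by
    have hy : 0 ≤ K * t := mul_nonneg hKpos.le htm.1
    have he := exp_sub_one_le_mul hy
    have hd : 0 ≤ ε₀ / K := div_nonneg hε₀nn hKpos.le
    have hexp : Real.exp (K * t) ≤ Real.exp (K * T) :=
      Real.exp_le_exp.mpr (mul_le_mul_of_nonneg_left htm.2 hKpos.le)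
    have hstep : ‖z t‖ ≤ ε₀ / K * (K * t * Real.exp (K * t)) := by
      calc ‖z t‖ ≤ 0 * Real.exp (K * t) + ε₀ / K * (Real.exp (K * t) - 1) := hzt
        _ ≤ 0 * Real.exp (K * t) + ε₀ / K * (K * t * Real.exp (K * t)) :=
            add_le_add_right (mul_le_mul_of_nonneg_left he hd) _
        _ = ε₀ / K * (K * t * Real.exp (K * t)) := by ring
    have heq2 : ε₀ / K * (K * t * Real.exp (K * t)) = ε₀ * t * Real.exp (K * t) := by
      field_simp
    rw [heq2] at hstep
    have hexp0 : (0:ℝ) ≤ Real.exp (K * t) := (Real.exp_pos _).le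
    have hexpT : (0:ℝ) ≤ Real.exp (K * T) := (Real.exp_pos _).le
    have h2 : ε₀ * t * Real.exp (K * t) ≤ ε₀ * T * Real.exp (K * T) := by
      have : ε₀ * t ≤ ε₀ * T := mul_le_mul_of_nonneg_left htm.2 hε₀nn
      nlinarith [mul_nonneg hε₀nn htm.1]
    have h3 : ε₀ * T * Real.exp (K * T) = (C₃ * Real.exp (K * T) ^ 3 * T) * ‖h‖ ^ 2 := by
      rw [hε₀]; ring
    linarith
  exact le_trans (norm_fst_le (z t)) hfin
end flow


theorem hasFDerivAt_of_quadratic {n : ℕ} {f : Eu n → Eu n} {A : Eu n →L[ℝ] Eu n}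
    {ξ₀ : Eu n} {M : ℝ} (hM : 0 ≤ M)
    (hb : ∀ h : Eu n, ‖f (ξ₀ + h) - f ξ₀ - A h‖ ≤ M * ‖h‖ ^ 2) :
    HasFDerivAt f A ξ₀ := by
  rw [hasFDerivAt_iff_isLittleO_nhds_zero]
  rw [Asymptotics.isLittleO_iff]
  intro ε hε
  rw [Metric.eventually_nhds_iff]
  refine ⟨ε / (M + 1), by positivity, fun y hy => ?_⟩
  rw [dist_zero_right] at hy
  calc ‖f (ξ₀ + y) - f ξ₀ - A y‖ ≤ M * ‖y‖ ^ 2 := hb y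
    _ ≤ ε * ‖y‖ := by
        have hy' : ‖y‖ * (M + 1) < ε := (lt_div_iff₀ (by positivity)).mp hy
        nlinarith [norm_nonneg y, sq_nonneg ‖y‖]

theorem det_near_one {n : ℕ} : ∃ δ > (0:ℝ), ∀ A : Eu n →L[ℝ] Eu n, ‖A - 1‖ ≤ δ →
    1 / 2 ≤ |LinearMap.det (A : Eu n →ₗ[ℝ] Eu n)| ∧
      |LinearMap.det (A : Eu n →ₗ[ℝ] Eu n)| ≤ 2 := by
  have hcont : Continuous fun A : Eu n →L[ℝ] Eu n => A.det :=
    ContinuousLinearMap.continuous_det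
  have h1 : (1 : Eu n →L[ℝ] Eu n).det = 1 := by
    show LinearMap.det _ = 1
    rw [show ((1 : Eu n →L[ℝ] Eu n) : Eu n →ₗ[ℝ] Eu n) = LinearMap.id from rfl,
      LinearMap.det_id]
  obtain ⟨δ, hδ, hball⟩ := Metric.continuousAt_iff.mp hcont.continuousAt
    (1/2) (by norm_num)
  refine ⟨δ / 2, by positivity, fun A hA => ?_⟩
  have hd : dist A 1 < δ := by
    rw [dist_eq_norm]; linarith
  have := hball hd
  rw [h1, Real.dist_eq] at this
  have h2 : |A.det - 1| < 1/2 := this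
  have h3 : A.det = LinearMap.det (A : Eu n →ₗ[ℝ] Eu n) := rfl
  rw [h3] at h2
  rw [abs_sub_lt_iff] at h2
  constructor
  · rw [abs_of_pos (by linarith)]; linarith
  · rw [abs_of_pos (by linarith)]; linarith

theorem key_pos {n : ℕ} (V : Eu n → ℝ) (hV : ContDiff ℝ (⊤ : ℕ∞) V)
    (hVb : ∀ k : ℕ, 2 ≤ k → ∃ C : ℝ, ∀ x : Eu n, ‖iteratedFDeriv ℝ k V x‖ ≤ C)
    (xtraj ξtraj : ℝ → Eu n → Eu n → Eu n)
    (hx0 : ∀ x ξ, xtraj 0 x ξ = x) (hξ0 : ∀ x ξ, ξtraj 0 x ξ = ξ)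
    (hode : ∀ t x ξ,
      HasDerivAt (fun s => xtraj s x ξ) (ξtraj t x ξ) t ∧
      HasDerivAt (fun s => ξtraj s x ξ) (-(gradV V (xtraj t x ξ))) t)
    {δ : ℝ} (hδ : 0 < δ) :
    ∃ T₂ > (0:ℝ), ∀ t : ℝ, 0 < t → t ≤ T₂ → ∀ x ξ : Eu n,
      ∃ A : Eu n →L[ℝ] Eu n,
        HasFDerivAt (fun η : Eu n => xtraj t x (t⁻¹ • η)) A ξ ∧ ‖A - 1‖ ≤ δ := by
  obtain ⟨C₂', hC2'⟩ := hVb 2 (by norm_num)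
  obtain ⟨C₃', hC3'⟩ := hVb 3 (by norm_num)
  set C₂ := max C₂' 0 with hC₂def
  set C₃ := max C₃' 0 with hC₃def
  have hC₂ : (0:ℝ) ≤ C₂ := le_max_right _ _
  have hC₃ : (0:ℝ) ≤ C₃ := le_max_right _ _
  have hC2 : ∀ y, ‖iteratedFDeriv ℝ 2 V y‖ ≤ C₂ := fun y => (hC2' y).trans (le_max_left _ _)
  have hC3 : ∀ y, ‖iteratedFDeriv ℝ 3 V y‖ ≤ C₃ := fun y => (hC3' y).trans (le_max_left _ _)
  set K := 1 + C₂ with hKdef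
  have hK : (0:ℝ) < K := by rw [hKdef]; linarith
  set T₂ := min (min 1 (1/(2+C₂))) (δ/(C₂ * Real.exp K + 1)) with hT₂def
  have hT₂ : 0 < T₂ := by
    refine lt_min (lt_min one_pos ?_) ?_ <;> positivity
  refine ⟨T₂, hT₂, fun t ht htT x ξ => ?_⟩
  set ξ₀ := t⁻¹ • ξ with hξ₀def
  set H : ℝ → Eu n →L[ℝ] Eu n := fun s => Hs V (xtraj s x ξ₀) with hHdef
  have hxc : Continuous fun s => xtraj s x ξ₀ := by
    rw [continuous_iff_continuousAt]; exact fun s => (hode s x ξ₀).1.continuousAt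
  have hHc : Continuous H := (hs_cont hV).comp hxc
  have hHb : ∀ s, ‖H s‖ ≤ C₂ := fun s => hs_norm hC2 _
  have hTC : T₂ * (2 + C₂) ≤ 1 := by
    have h1 : T₂ ≤ 1/(2+C₂) := le_trans (min_le_left _ _) (min_le_right _ _)
    rw [le_div_iff₀ (by positivity)] at h1
    linarith
  obtain ⟨W, U, hW0, hU0, hWU⟩ := variational_exists H hHc hC₂ hHb hT₂ hTC
  have htm : t ∈ Icc (0:ℝ) T₂ := ⟨ht.le, htT⟩
  have hM : (0:ℝ) ≤ C₃ * Real.exp ((1 + C₂) * T₂) ^ 3 * T₂ := by positivity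
  have hFd : HasFDerivAt (fun ξ' => xtraj t x ξ') (W t) ξ₀ :=
    hasFDerivAt_of_quadratic hM (fun h => flow_deriv_bound hV hC₂ hC2 hC₃ hC3
      xtraj ξtraj hx0 hξ0 hode x ξ₀ hT₂ W U hW0 hU0 hWU htm h)
  set L : Eu n →L[ℝ] Eu n := t⁻¹ • (1 : Eu n →L[ℝ] Eu n) with hLdef
  have hL : HasFDerivAt (fun η : Eu n => t⁻¹ • η) L ξ := L.hasFDerivAt
  have hcomp : HasFDerivAt (fun η : Eu n => xtraj t x (t⁻¹ • η)) ((W t).comp L) ξ :=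
    hFd.comp ξ hL
  refine ⟨(W t).comp L, hcomp, ?_⟩
  have hA : (W t).comp L - 1 = t⁻¹ • (W t - t • 1) := by
    refine ContinuousLinearMap.ext fun v => ?_
    simp only [ContinuousLinearMap.sub_apply, ContinuousLinearMap.comp_apply,
      ContinuousLinearMap.smul_apply, ContinuousLinearMap.one_apply, hLdef]
    rw [(W t).map_smul, smul_sub, smul_smul, inv_mul_cancel₀ (ne_of_gt ht), one_smul]
  rw [hA]
  have hWb := W_bound H hC₂ hHb W U hW0 hU0 hWU htm
  have hsm : ‖t⁻¹ • (W t - t • 1)‖ ≤ ‖t⁻¹‖ * ‖W t - t • 1‖ :=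
    ContinuousLinearMap.opNorm_smul_le _ _
  have habs : ‖t⁻¹‖ = t⁻¹ := by
    rw [Real.norm_eq_abs, abs_of_pos (inv_pos.mpr ht)]
  have hT1 : T₂ ≤ 1 := le_trans (min_le_left _ _) (min_le_left _ _)
  have hexp : Real.exp ((1 + C₂) * t) ≤ Real.exp K := by
    rw [Real.exp_le_exp, hKdef]
    nlinarith [ht.le, htT, hT1]
  have hmid : t⁻¹ * (C₂ * t ^ 2 * Real.exp ((1 + C₂) * t)) = C₂ * t * Real.exp ((1 + C₂) * t) := by
    field_simp
  have hfin : C₂ * t * Real.exp ((1 + C₂) * t) ≤ δ := by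
    have h2 : C₂ * t * Real.exp ((1 + C₂) * t) ≤ C₂ * T₂ * Real.exp K := by
      have e0 : (0:ℝ) ≤ Real.exp ((1 + C₂) * t) := (Real.exp_pos _).le
      have e1 : C₂ * t ≤ C₂ * T₂ := mul_le_mul_of_nonneg_left htT hC₂
      nlinarith [mul_nonneg hC₂ ht.le, mul_nonneg hC₂ hT₂.le]
    have h3 : T₂ ≤ δ/(C₂ * Real.exp K + 1) := min_le_right _ _
    rw [le_div_iff₀ (by positivity)] at h3
    nlinarith [hT₂]
  calc ‖t⁻¹ • (W t - t • 1)‖ ≤ ‖t⁻¹‖ * ‖W t - t • 1‖ := hsm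
    _ = t⁻¹ * ‖W t - t • 1‖ := by rw [habs]
    _ ≤ t⁻¹ * (C₂ * t ^ 2 * Real.exp ((1 + C₂) * t)) :=
        mul_le_mul_of_nonneg_left hWb (inv_pos.mpr ht).le
    _ = C₂ * t * Real.exp ((1 + C₂) * t) := hmid
    _ ≤ δ := hfin

/-- for small `t ≠ 0` the Jacobian determinant of the rescaled
map `ξ ↦ x(t;x,ξ/t)` is bounded between `1/2` and `2`. -/
theorem flow_rescaled_jacobian {n : ℕ} (V : Eu n → ℝ) (hV : ContDiff ℝ (⊤ : ℕ∞) V)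
    (hVb : ∀ k : ℕ, 2 ≤ k → ∃ C : ℝ, ∀ x : Eu n, ‖iteratedFDeriv ℝ k V x‖ ≤ C)
    (xtraj ξtraj : ℝ → Eu n → Eu n → Eu n)
    (hx0 : ∀ x ξ, xtraj 0 x ξ = x) (hξ0 : ∀ x ξ, ξtraj 0 x ξ = ξ)
    (hode : ∀ t x ξ,
      HasDerivAt (fun s => xtraj s x ξ) (ξtraj t x ξ) t ∧
      HasDerivAt (fun s => ξtraj s x ξ) (-(gradV V (xtraj t x ξ))) t) :
    ∃ T₂ > (0 : ℝ), ∀ (t : ℝ), t ≠ 0 → |t| ≤ T₂ → ∀ (x ξ : Eu n),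
      1 / 2 ≤ |LinearMap.det
          ((fderiv ℝ (fun η : Eu n => xtraj t x (t⁻¹ • η)) ξ) : Eu n →ₗ[ℝ] Eu n)| ∧
      |LinearMap.det
          ((fderiv ℝ (fun η : Eu n => xtraj t x (t⁻¹ • η)) ξ) : Eu n →ₗ[ℝ] Eu n)| ≤ 2 := by
  obtain ⟨δ, hδ, hdet⟩ := det_near_one (n := n)
  obtain ⟨Tp, hTp, hkp⟩ := key_pos V hV hVb xtraj ξtraj hx0 hξ0 hode hδ
  have hode2 : ∀ t x ξ,
      HasDerivAt (fun s => xtraj (-s) x (-ξ)) (-(ξtraj (-t) x (-ξ))) t ∧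
      HasDerivAt (fun s => -(ξtraj (-s) x (-ξ))) (-(gradV V (xtraj (-t) x (-ξ)))) t := by
    intro t x ξ
    constructor
    · have h3 := HasDerivAt.scomp_of_eq (hg := (hode (-t) x (-ξ)).1)
        (hh := hasDerivAt_neg t) (hy := rfl)
      exact h3.congr_deriv (by simp)
    · have h3 := (HasDerivAt.scomp_of_eq (hg := (hode (-t) x (-ξ)).2)
        (hh := hasDerivAt_neg t) (hy := rfl)).neg
      exact h3.congr_deriv (by simp)
  obtain ⟨Tm, hTm, hkm⟩ := key_pos V hV hVb
    (fun t x ξ => xtraj (-t) x (-ξ)) (fun t x ξ => -(ξtraj (-t) x (-ξ)))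
    (fun x ξ => by show xtraj (-(0:ℝ)) x (-ξ) = x; rw [neg_zero, hx0])
    (fun x ξ => by show -(ξtraj (-(0:ℝ)) x (-ξ)) = ξ; rw [neg_zero, hξ0, neg_neg])
    hode2 hδ
  refine ⟨min Tp Tm, lt_min hTp hTm, fun t ht htle x ξ => ?_⟩
  rcases lt_or_gt_of_ne ht with hneg | hpos
  · have h1 : 0 < -t := by linarith
    have habs : |t| = -t := abs_of_neg hneg
    have h2 : -t ≤ Tm := le_trans (habs ▸ htle) (min_le_right _ _)
    obtain ⟨A, hA, hAd⟩ := hkm (-t) h1 h2 x ξ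
    have hfe : (fun η : Eu n => xtraj (-(-t)) x (-((-t)⁻¹ • η)))
        = fun η : Eu n => xtraj t x (t⁻¹ • η) := by
      funext η
      rw [neg_neg, inv_neg, neg_smul, neg_neg]
    rw [hfe] at hA
    rw [hA.fderiv]
    exact hdet A hAd
  · have h2 : t ≤ Tp := le_trans (le_trans (le_abs_self t) htle) (min_le_left _ _)
    obtain ⟨A, hA, hAd⟩ := hkp t hpos h2 x ξ
    rw [hA.fderiv]
    exact hdet A hAd
end
end

section
/- Let g ∈ 𝒮(ℝⁿ) and t ∈ ℝ. Then the STFT of the free Schrödinger evolution satisfies the exact transport identity: V_{g(t)}[e^{itΔ/2} u₀](x,ξ) = e^{−it|ξ|²/2} V_g u₀(x − tξ, ξ) for all u₀ ∈ 𝒮(ℝⁿ) and all (x,ξ) ∈ ℝ²ⁿ, where g(t) = e^{itΔ/2} g. -/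
open MeasureTheory Complex ENNReal Real ContDiff
open scoped RealInnerProductSpace

noncomputable section

/-- Short-time Fourier transform `V_g f(x,ξ) = ∫ conj(g(y−x)) f(y) e^{−i y·ξ} dy`. -/
def stft {n : ℕ} (g f : Eu n → ℂ) (x ξ : Eu n) : ℂ :=
  ∫ y : Eu n, (starRingEnd ℂ) (g (y - x)) * f y *
    Complex.exp (-(Complex.I * ((inner ℝ y ξ : ℝ) : ℂ)))

/-- Formal adjoint of the STFT:
`V_g* F(x) = (2π)^{−n} ∬ g(x−y) F(y,ξ) e^{i x·ξ} dy dξ`. -/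
def stftAdj {n : ℕ} (g : Eu n → ℂ) (F : Eu n → Eu n → ℂ) (x : Eu n) : ℂ :=
  (((2 * Real.pi) ^ n)⁻¹ : ℝ) •
    ∫ p : Eu n × Eu n, g (x - p.1) * F p.1 p.2 *
      Complex.exp (Complex.I * ((inner ℝ x p.2 : ℝ) : ℂ))

/-- Fourier transform with the convention `F f(ξ) = ∫ f(x) e^{−i x·ξ} dx`. -/
def ftrans {n : ℕ} (f : Eu n → ℂ) (ξ : Eu n) : ℂ :=
  ∫ x : Eu n, f x * Complex.exp (-(Complex.I * ((inner ℝ x ξ : ℝ) : ℂ)))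

/-- Free Schrödinger evolution `e^{itΔ/2} f = F^{−1}[e^{−it|ξ|²/2} F f]`. -/
def freeEvol {n : ℕ} (t : ℝ) (f : Eu n → ℂ) (x : Eu n) : ℂ :=
  (((2 * Real.pi) ^ n)⁻¹ : ℝ) •
    ∫ ξ : Eu n, Complex.exp (-(Complex.I * t * (‖ξ‖ ^ 2 / 2 : ℝ))) * ftrans f ξ *
      Complex.exp (Complex.I * ((inner ℝ x ξ : ℝ) : ℂ))

/-- Mixed norm `‖F‖_{L_x^p L_ξ^q}`. -/
def mixedNorm {n : ℕ} (F : Eu n → Eu n → ℂ) (p q : ℝ≥0∞) : ℝ≥0∞ :=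
  eLpNorm (fun x : Eu n => (eLpNorm (F x) q volume).toReal) p volume

lemma norm_cexp_eq_one {z : ℂ} (hz : z.re = 0) : ‖Complex.exp z‖ = 1 := by
  rw [Complex.norm_exp, hz, Real.exp_zero]

lemma iteratedDeriv_Iphase (i : ℕ) (r : ℝ) :
    iteratedDeriv i (fun r : ℝ => Complex.exp (Complex.I * r)) r
      = Complex.I ^ i * Complex.exp (Complex.I * r) := by
  induction i generalizing r with
  | zero => simp
  | succ k ih =>
    rw [iteratedDeriv_succ]
    have hfun : iteratedDeriv k (fun r : ℝ => Complex.exp (Complex.I * r))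
        = fun r : ℝ => Complex.I ^ k * Complex.exp (Complex.I * r) := funext fun r => ih r
    rw [hfun]
    have h0 : HasDerivAt (fun r : ℝ => (r : ℂ)) 1 r := by
      simpa using (hasDerivAt_id r).ofReal_comp
    have h3 := ((h0.const_mul Complex.I).cexp).const_mul (Complex.I ^ k)
    rw [h3.deriv]; ring

section TG
variable {n : ℕ}

lemma contDiff_Iphase : ContDiff ℝ ∞ (fun r : ℝ => Complex.exp (Complex.I * r)) := by
  have h1 : ContDiff ℝ ∞ (fun r : ℝ => (Complex.I * r : ℂ)) :=
    ContDiff.mul contDiff_const Complex.ofRealCLM.contDiff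
  have h2 : ContDiff ℝ ∞ Complex.exp := Complex.contDiff_exp
  exact h2.comp h1

lemma norm_iteratedFDeriv_Iphase_le (i : ℕ) (y : ℝ) :
    ‖iteratedFDeriv ℝ i (fun r : ℝ => Complex.exp (Complex.I * r)) y‖ ≤ 1 := by
  rw [norm_iteratedFDeriv_eq_norm_iteratedDeriv, iteratedDeriv_Iphase]
  rw [norm_mul, norm_pow, Complex.norm_I, one_pow, one_mul]
  exact le_of_eq (norm_cexp_eq_one (by simp))

-- bounds on iterated derivatives of the identity
lemma norm_iteratedFDeriv_id_le (i : ℕ) (x : Eu n) :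
    ‖iteratedFDeriv ℝ i (fun y : Eu n => y) x‖ ≤ 1 + ‖x‖ := by
  match i with
  | 0 => rw [norm_iteratedFDeriv_zero]; linarith
  | 1 =>
    rw [← norm_iteratedFDeriv_fderiv (n := 0), norm_iteratedFDeriv_zero]
    have : fderiv ℝ (fun y : Eu n => y) x = ContinuousLinearMap.id ℝ (Eu n) := fderiv_id
    rw [this]
    have h2 : ‖ContinuousLinearMap.id ℝ (Eu n)‖ ≤ 1 := ContinuousLinearMap.norm_id_le
    have h3 : (0:ℝ) ≤ ‖x‖ := norm_nonneg x
    linarith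
  | (k+2) =>
    have h1 : fderiv ℝ (fun y : Eu n => y) = fun _ : Eu n => ContinuousLinearMap.id ℝ (Eu n) :=
      funext fun y => fderiv_id
    rw [← norm_iteratedFDeriv_fderiv, h1, iteratedFDeriv_const_of_ne (Nat.succ_ne_zero k)]
    simp only [Pi.zero_apply, norm_zero]
    positivity
end TG

section TG2
variable {n : ℕ}

lemma contDiff_qc (c : ℝ) : ContDiff ℝ ∞ (fun y : Eu n => c * ⟪y, y⟫) :=
  contDiff_const.mul (contDiff_id.inner ℝ contDiff_id)

lemma norm_iteratedFDeriv_qc_le (c : ℝ) (i : ℕ) (x : Eu n) :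
    ‖iteratedFDeriv ℝ i (fun y : Eu n => c * ⟪y, y⟫) x‖
      ≤ ‖c • (innerSL ℝ : Eu n →L[ℝ] Eu n →L[ℝ] ℝ)‖ * 2 ^ i * (1 + ‖x‖) ^ 2 := by
  set B := c • (innerSL ℝ : Eu n →L[ℝ] Eu n →L[ℝ] ℝ) with hB
  have hfun : (fun y : Eu n => c * ⟪y, y⟫) = fun y : Eu n => B y y := by
    funext y
    simp [hB]
  rw [hfun]
  have h := B.norm_iteratedFDeriv_le_of_bilinear (f := fun y : Eu n => y)
    (g := fun y : Eu n => y) (contDiff_id.of_le le_top) (contDiff_id.of_le le_top) x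
    (n := i) (le_top)
  refine h.trans ?_
  rw [mul_assoc]
  refine mul_le_mul_of_nonneg_left ?_ (norm_nonneg B)
  have hterm : ∀ j ∈ Finset.range (i+1),
      (i.choose j : ℝ) * ‖iteratedFDeriv ℝ j (fun y : Eu n => y) x‖ *
        ‖iteratedFDeriv ℝ (i - j) (fun y : Eu n => y) x‖
      ≤ (i.choose j : ℝ) * (1 + ‖x‖) ^ 2 := by
    intro j _
    have h1 := norm_iteratedFDeriv_id_le (n := n) j x
    have h2 := norm_iteratedFDeriv_id_le (n := n) (i - j) x
    have hx : (0:ℝ) ≤ 1 + ‖x‖ := by positivity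
    calc (i.choose j : ℝ) * ‖iteratedFDeriv ℝ j (fun y : Eu n => y) x‖ *
        ‖iteratedFDeriv ℝ (i - j) (fun y : Eu n => y) x‖
        ≤ (i.choose j : ℝ) * (1 + ‖x‖) * (1 + ‖x‖) := by
          apply mul_le_mul _ h2 (norm_nonneg _) (by positivity)
          exact mul_le_mul_of_nonneg_left h1 (by positivity)
      _ = (i.choose j : ℝ) * (1 + ‖x‖) ^ 2 := by ring
  refine (Finset.sum_le_sum hterm).trans ?_
  rw [← Finset.sum_mul]
  have : (∑ j ∈ Finset.range (i+1), (i.choose j : ℝ)) = 2 ^ i := by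
    exact_mod_cast congrArg (Nat.cast : ℕ → ℝ) (Nat.sum_range_choose i)
  rw [this]

lemma hasTemperateGrowth_phase (c : ℝ) :
    Function.HasTemperateGrowth
      (fun w : Eu n => Complex.exp (Complex.I * ((c * ‖w‖^2 : ℝ) : ℂ))) := by
  have hfun : (fun w : Eu n => Complex.exp (Complex.I * ((c * ‖w‖^2 : ℝ) : ℂ)))
      = (fun r : ℝ => Complex.exp (Complex.I * r)) ∘ (fun y : Eu n => c * ⟪y, y⟫) := by
    funext w
    rw [Function.comp_apply, real_inner_self_eq_norm_sq]
  rw [hfun]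
  refine ⟨contDiff_Iphase.comp (contDiff_qc c), fun m => ?_⟩
  set K : ℝ := max 1 ‖c • (innerSL ℝ : Eu n →L[ℝ] Eu n →L[ℝ] ℝ)‖ with hK
  have hK1 : (1:ℝ) ≤ K := le_max_left _ _
  refine ⟨2*m, (Nat.factorial m : ℝ) * (K * 2^m)^m, fun x => ?_⟩
  set D : ℝ := K * 2^m * (1 + ‖x‖)^2 with hD
  have hx0 : (0:ℝ) ≤ ‖x‖ := norm_nonneg x
  have hx1 : (1:ℝ) ≤ (1 + ‖x‖)^2 := by nlinarith
  have h2m : (1:ℝ) ≤ (2:ℝ)^m := one_le_pow₀ (by norm_num)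
  have hD1 : (1:ℝ) ≤ D := by
    rw [hD]
    calc (1:ℝ) = 1 * 1 * 1 := by ring
    _ ≤ K * 2^m * (1 + ‖x‖)^2 := by
        apply mul_le_mul _ hx1 (by norm_num) (by positivity)
        exact mul_le_mul hK1 h2m (by norm_num) (le_trans (by norm_num) hK1)
  have hC : ∀ i, i ≤ m →
      ‖iteratedFDeriv ℝ i (fun r : ℝ => Complex.exp (Complex.I * r))
        ((fun y : Eu n => c * ⟪y, y⟫) x)‖ ≤ 1 := fun i _ =>
    norm_iteratedFDeriv_Iphase_le i _
  have hDbound : ∀ i, 1 ≤ i → i ≤ m →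
      ‖iteratedFDeriv ℝ i (fun y : Eu n => c * ⟪y, y⟫) x‖ ≤ D ^ i := by
    intro i h1 h2
    have hb := norm_iteratedFDeriv_qc_le c i x
    have hstep : ‖c • (innerSL ℝ : Eu n →L[ℝ] Eu n →L[ℝ] ℝ)‖ * 2 ^ i * (1 + ‖x‖) ^ 2 ≤ D := by
      rw [hD]
      apply mul_le_mul _ le_rfl (by positivity) (by positivity)
      apply mul_le_mul (le_max_right _ _) _ (by positivity) (le_trans zero_le_one hK1)
      exact pow_le_pow_right₀ (by norm_num) h2
    refine hb.trans (hstep.trans ?_)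
    exact le_self_pow₀ hD1 (by omega)
  have hcomp := norm_iteratedFDeriv_comp_le contDiff_Iphase (contDiff_qc c) (mod_cast le_top) x hC hDbound
  refine hcomp.trans ?_
  rw [hD]
  have : (K * 2 ^ m * (1 + ‖x‖) ^ 2) ^ m = (K * 2^m)^m * (1 + ‖x‖)^(2*m) := by
    rw [mul_pow, ← pow_mul, mul_comm 2 m]
  rw [this]
  rw [mul_one]
  rw [← mul_assoc]
end TG2


open FourierTransform SchwartzMap Module MeasureTheory.Measure

section Layer2
variable {n : ℕ}

lemma two_pi_ne : (2 * π) ≠ 0 := by positivity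

lemma ftrans_eq (f : Eu n → ℂ) (ξ : Eu n) :
    ftrans f ξ = 𝓕 f ((2 * π)⁻¹ • ξ) := by
  rw [Real.fourier_eq']
  unfold ftrans
  congr 1
  funext v
  rw [smul_eq_mul, mul_comm]
  congr 1
  rw [real_inner_smul_right]
  set a := (inner ℝ v ξ : ℝ) with ha
  have hre : -2*π*((2*π)⁻¹*a) = -a := by
    field_simp
  rw [hre]
  push_cast
  ring

lemma ftrans_smul (f : Eu n → ℂ) (w : Eu n) :
    ftrans f ((2 * π) • w) = 𝓕 f w := by
  rw [ftrans_eq, smul_smul, inv_mul_cancel₀ two_pi_ne, one_smul]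

lemma freeEvol_eq (t : ℝ) (f : Eu n → ℂ) (x : Eu n) :
    freeEvol t f x =
      𝓕⁻ (fun w : Eu n =>
        𝓕 f w * Complex.exp (Complex.I * ((-t * (2*π)^2/2 * ‖w‖^2 : ℝ) : ℂ))) x := by
  unfold freeEvol
  have hn : finrank ℝ (Eu n) = n := finrank_euclideanSpace_fin
  have hchg := integral_comp_smul (μ := volume)
    (f := fun ζ : Eu n => Complex.exp (-(Complex.I * t * (‖ζ‖ ^ 2 / 2 : ℝ))) * ftrans f ζ *
      Complex.exp (Complex.I * ((inner ℝ x ζ : ℝ) : ℂ))) (2 * π)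
  rw [hn] at hchg
  have habs : |((2 * π) ^ n)⁻¹| = ((2 * π) ^ n)⁻¹ :=
    _root_.abs_of_nonneg (by positivity)
  rw [habs] at hchg
  rw [← hchg]
  rw [Real.fourierInv_eq']
  congr 1
  funext ζ
  rw [ftrans_smul, smul_eq_mul]
  have hnorm : ‖(2 * π) • ζ‖ ^ 2 = (2*π)^2 * ‖ζ‖^2 := by
    rw [norm_smul, Real.norm_eq_abs, _root_.abs_of_nonneg (by positivity : (0:ℝ) ≤ 2*π)]
    ring
  have hip : (inner ℝ x ((2 * π) • ζ) : ℝ) = 2 * π * (inner ℝ ζ x : ℝ) := by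
    rw [real_inner_smul_right, real_inner_comm]
  have e1 : Complex.exp (-(Complex.I * t * (‖(2 * π) • ζ‖ ^ 2 / 2 : ℝ)))
      = Complex.exp (Complex.I * ((-t * (2*π)^2/2 * ‖ζ‖^2 : ℝ) : ℂ)) := by
    congr 1
    rw [hnorm]
    push_cast
    ring
  have e2 : Complex.exp (Complex.I * ((inner ℝ x ((2 * π) • ζ) : ℝ) : ℂ))
      = Complex.exp ((((2 * π * (inner ℝ ζ x : ℝ) : ℝ)) : ℂ) * Complex.I) := by
    rw [hip]; ring_nf
  rw [e1, e2]
  ring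

end Layer2

section Layer3
variable {n : ℕ}

def WSm (t : ℝ) (f : SchwartzMap (Eu n) ℂ) : SchwartzMap (Eu n) ℂ :=
  SchwartzMap.bilinLeftCLM (ContinuousLinearMap.mul ℝ ℂ)
    (hasTemperateGrowth_phase (n := n) (-t * (2*π)^2/2)) (SchwartzMap.fourierTransformCLM ℝ f)

lemma WSm_apply (t : ℝ) (f : SchwartzMap (Eu n) ℂ) (w : Eu n) :
    WSm t f w = 𝓕 ⇑f w * Complex.exp (Complex.I * ((-t * (2*π)^2/2 * ‖w‖^2 : ℝ) : ℂ)) := rfl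

def USm (t : ℝ) (f : SchwartzMap (Eu n) ℂ) : SchwartzMap (Eu n) ℂ :=
  (FourierTransform.fourierCLE ℝ (SchwartzMap (Eu n) ℂ)).symm (WSm t f)

lemma freeEvol_eq_schwartz (t : ℝ) (f : SchwartzMap (Eu n) ℂ) :
    freeEvol t ⇑f = ⇑(USm t f) := by
  funext x
  rw [freeEvol_eq]
  have h : ⇑(USm t f) = 𝓕⁻ ⇑(WSm t f) := by
    rw [USm, fourierTransformCLE_symm_apply, fourierInv_coe]
  rw [h]
  congr 1

lemma fourier_USm (t : ℝ) (f : SchwartzMap (Eu n) ℂ) :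
    𝓕 ⇑(USm t f) = ⇑(WSm t f) := by
  have h2 := (FourierTransform.fourierCLE ℝ (SchwartzMap (Eu n) ℂ)).apply_symm_apply (WSm t f)
  calc 𝓕 ⇑(USm t f) = ⇑(FourierTransform.fourierCLE ℝ (SchwartzMap (Eu n) ℂ) (USm t f)) := by
        rw [fourierTransformCLE_apply, fourier_coe]
    _ = ⇑(WSm t f) := by rw [USm, h2]

lemma ftrans_freeEvol (t : ℝ) (f : SchwartzMap (Eu n) ℂ) (η : Eu n) :
    ftrans (freeEvol t ⇑f) η
      = Complex.exp (-(Complex.I * t * (‖η‖ ^ 2 / 2 : ℝ))) * ftrans ⇑f η := by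
  rw [freeEvol_eq_schwartz, ftrans_eq, fourier_USm, WSm_apply, ftrans_eq, mul_comm]
  congr 1
  have hnorm : ‖(2*π)⁻¹ • η‖^2 = ((2*π)⁻¹)^2 * ‖η‖^2 := by
    rw [norm_smul, Real.norm_eq_abs, _root_.abs_of_nonneg (by positivity : (0:ℝ) ≤ (2*π)⁻¹)]
    ring
  rw [hnorm]
  congr 1
  have h1 : -t * (2 * π) ^ 2 / 2 * (((2*π)⁻¹)^2 * ‖η‖^2) = -(t * (‖η‖^2/2)) := by
    field_simp
  rw [h1]
  push_cast
  ring

lemma ftrans_schwartz_eq (f : SchwartzMap (Eu n) ℂ) :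
    ftrans ⇑f = fun ξ : Eu n => 𝓕 ⇑f ((2 * π)⁻¹ • ξ) := funext (ftrans_eq ⇑f)

lemma ftrans_schwartz_integrable (f : SchwartzMap (Eu n) ℂ) : Integrable (ftrans ⇑f) := by
  rw [ftrans_schwartz_eq]
  have hi : Integrable (𝓕 ⇑f) := by
    have := (SchwartzMap.fourierTransformCLM ℝ f).integrable (μ := volume)
    rwa [SchwartzMap.fourierTransformCLM_apply, fourier_coe] at this
  exact hi.comp_smul (inv_ne_zero two_pi_ne)

lemma ftrans_schwartz_continuous (f : SchwartzMap (Eu n) ℂ) : Continuous (ftrans ⇑f) := by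
  rw [ftrans_schwartz_eq]
  have hc : Continuous (𝓕 ⇑f) := by
    have := (SchwartzMap.fourierTransformCLM ℝ f).continuous
    rwa [SchwartzMap.fourierTransformCLM_apply, fourier_coe] at this
  exact hc.comp (continuous_const_smul _)

lemma freeEvol_zero (f : SchwartzMap (Eu n) ℂ) : freeEvol 0 ⇑f = ⇑f := by
  rw [freeEvol_eq_schwartz]
  have : USm (n := n) 0 f = f := by
    rw [USm, ContinuousLinearEquiv.symm_apply_eq]
    apply SchwartzMap.ext
    intro w
    rw [WSm_apply, fourierTransformCLE_apply, fourier_coe]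
    norm_num
  rw [this]

end Layer3

section Layer4
variable {n : ℕ}

lemma conj_cexp_negI_mul (t s : ℝ) :
    (starRingEnd ℂ) (Complex.exp (-(Complex.I * t * (s : ℂ))))
      = Complex.exp (Complex.I * t * (s : ℂ)) := by
  rw [← Complex.exp_conj]
  congr 1
  simp [map_mul]

lemma conj_cexp_I (a : ℝ) :
    (starRingEnd ℂ) (Complex.exp (Complex.I * (a : ℂ)))
      = Complex.exp (-(Complex.I * (a : ℂ))) := by
  rw [← Complex.exp_conj]
  congr 1
  simp [map_mul]

lemma norm_cexp_negI (a : ℝ) : ‖Complex.exp (-(Complex.I * (a : ℂ)))‖ = 1 :=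
  norm_cexp_eq_one (by simp)

lemma norm_cexp_negI_t (t s : ℝ) : ‖Complex.exp (-(Complex.I * t * (s : ℂ)))‖ = 1 :=
  norm_cexp_eq_one (by simp)

lemma norm_cexp_posI (a : ℝ) : ‖Complex.exp (Complex.I * (a : ℂ))‖ = 1 :=
  norm_cexp_eq_one (by simp)

lemma stft_rep (t : ℝ) (g u₀ : SchwartzMap (Eu n) ℂ) (x ξ : Eu n) :
    stft (freeEvol t ⇑g) (freeEvol t ⇑u₀) x ξ =
      (((2 * π) ^ n)⁻¹ : ℝ) •
        ∫ ζ : Eu n,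
          (starRingEnd ℂ) (Complex.exp (-(Complex.I * t * ((‖ζ‖ ^ 2 / 2 : ℝ) : ℂ)))) *
            (starRingEnd ℂ) (ftrans ⇑g ζ) *
            Complex.exp (Complex.I * ((inner ℝ x ζ : ℝ) : ℂ)) *
            ftrans (freeEvol t ⇑u₀) (ζ + ξ) := by
  unfold stft
  set U : Eu n → ℂ := freeEvol t ⇑u₀ with hU
  set Gf : Eu n → ℂ := ftrans ⇑g with hGf
  set m : Eu n → ℂ := fun ζ => Complex.exp (-(Complex.I * t * ((‖ζ‖ ^ 2 / 2 : ℝ) : ℂ))) with hm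
  -- the double integrand
  set A : Eu n → Eu n → ℂ := fun y ζ =>
    (starRingEnd ℂ) (m ζ) * (starRingEnd ℂ) (Gf ζ) *
      Complex.exp (-(Complex.I * ((inner ℝ (y - x) ζ : ℝ) : ℂ))) *
      (U y * Complex.exp (-(Complex.I * ((inner ℝ y ξ : ℝ) : ℂ)))) with hA
  have hUc : Continuous U := by
    rw [hU, freeEvol_eq_schwartz]; exact (USm t u₀).continuous
  have hUi : Integrable U := by
    rw [hU, freeEvol_eq_schwartz]; exact (USm t u₀).integrable
  have hGc : Continuous Gf := ftrans_schwartz_continuous g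
  have hGi : Integrable Gf := ftrans_schwartz_integrable g
  -- step A : rewrite pointwise in y
  have stepA : ∀ y : Eu n,
      (starRingEnd ℂ) (freeEvol t ⇑g (y - x)) * U y *
          Complex.exp (-(Complex.I * ((inner ℝ y ξ : ℝ) : ℂ)))
        = (((2 * π) ^ n)⁻¹ : ℝ) • ∫ ζ : Eu n, A y ζ := by
    intro y
    have h1 : (starRingEnd ℂ) (freeEvol t ⇑g (y - x))
        = (((2 * π) ^ n)⁻¹ : ℝ) • ∫ ζ : Eu n,
            (starRingEnd ℂ) (m ζ) * (starRingEnd ℂ) (Gf ζ) *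
              Complex.exp (-(Complex.I * ((inner ℝ (y - x) ζ : ℝ) : ℂ))) := by
      unfold freeEvol
      rw [starRingEnd_apply, star_smul, star_trivial, ← starRingEnd_apply]
      rw [← integral_conj]
      congr 1
      refine integral_congr_ae (Filter.Eventually.of_forall fun ζ => ?_)
      simp only [hm, hGf]
      rw [map_mul, map_mul, conj_cexp_I]
    rw [h1, mul_assoc, smul_mul_assoc]
    congr 1
    rw [← integral_mul_const]
  simp_rw [stepA]
  rw [integral_smul]
  congr 1
  -- Fubini
  have hint : Integrable (Function.uncurry A) (volume : Measure (Eu n × Eu n)) := by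
    have hcont : Continuous (Function.uncurry A) := by
      rw [hA]
      apply Continuous.mul
      apply Continuous.mul
      apply Continuous.mul
      · apply Complex.continuous_conj.comp
        apply Complex.continuous_exp.comp
        fun_prop
      · exact (Complex.continuous_conj.comp hGc).comp continuous_snd
      · apply Complex.continuous_exp.comp
        apply Continuous.neg
        apply Continuous.mul continuous_const
        apply Complex.continuous_ofReal.comp
        exact Continuous.inner (by fun_prop) (by fun_prop)
      · apply Continuous.mul (hUc.comp continuous_fst)
        apply Complex.continuous_exp.comp
        apply Continuous.neg
        apply Continuous.mul continuous_const
        apply Complex.continuous_ofReal.comp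
        exact Continuous.inner (by fun_prop) (by fun_prop)
    apply Integrable.mono' (g := fun p : Eu n × Eu n => ‖U p.1‖ * ‖Gf p.2‖)
    · rw [MeasureTheory.Measure.volume_eq_prod (Eu n) (Eu n)]
      exact hUi.norm.mul_prod hGi.norm
    · exact hcont.aestronglyMeasurable
    · refine Filter.Eventually.of_forall (fun p => ?_)
      rw [hA]
      simp only [Function.uncurry]
      rw [norm_mul, norm_mul, norm_mul, norm_mul]
      rw [RCLike.norm_conj, RCLike.norm_conj]
      rw [hm]
      rw [norm_cexp_negI_t, norm_cexp_negI, norm_cexp_negI]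
      ring_nf
      exact le_of_eq (by ring)
  rw [MeasureTheory.integral_integral_swap (f := A) (by rwa [← MeasureTheory.Measure.volume_eq_prod (Eu n) (Eu n)])]
  -- inner integral in y
  congr 1
  funext ζ
  have hsplit : ∀ y : Eu n, A y ζ =
      ((starRingEnd ℂ) (m ζ) * (starRingEnd ℂ) (Gf ζ) *
        Complex.exp (Complex.I * ((inner ℝ x ζ : ℝ) : ℂ))) *
      (U y * Complex.exp (-(Complex.I * ((inner ℝ y (ζ + ξ) : ℝ) : ℂ)))) := by
    intro y
    simp only [hA]
    have e1 : Complex.exp (-(Complex.I * ((inner ℝ (y - x) ζ : ℝ) : ℂ)))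
        = Complex.exp (Complex.I * ((inner ℝ x ζ : ℝ) : ℂ)) *
          Complex.exp (-(Complex.I * ((inner ℝ y ζ : ℝ) : ℂ))) := by
      rw [← Complex.exp_add]
      congr 1
      rw [inner_sub_left]
      push_cast
      ring
    have e2 : Complex.exp (-(Complex.I * ((inner ℝ y ζ : ℝ) : ℂ))) *
          Complex.exp (-(Complex.I * ((inner ℝ y ξ : ℝ) : ℂ)))
        = Complex.exp (-(Complex.I * ((inner ℝ y (ζ + ξ) : ℝ) : ℂ))) := by
      rw [← Complex.exp_add]
      congr 1
      rw [inner_add_right]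
      push_cast
      ring
    rw [e1]
    calc (starRingEnd ℂ) (m ζ) * (starRingEnd ℂ) (Gf ζ) *
        (Complex.exp (Complex.I * ((inner ℝ x ζ : ℝ) : ℂ)) *
          Complex.exp (-(Complex.I * ((inner ℝ y ζ : ℝ) : ℂ)))) *
        (U y * Complex.exp (-(Complex.I * ((inner ℝ y ξ : ℝ) : ℂ))))
        = ((starRingEnd ℂ) (m ζ) * (starRingEnd ℂ) (Gf ζ) *
            Complex.exp (Complex.I * ((inner ℝ x ζ : ℝ) : ℂ))) *
          (U y * (Complex.exp (-(Complex.I * ((inner ℝ y ζ : ℝ) : ℂ))) *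
            Complex.exp (-(Complex.I * ((inner ℝ y ξ : ℝ) : ℂ))))) := by ring
      _ = _ := by rw [e2]
  simp_rw [hsplit]
  rw [integral_const_mul]
  congr 1
end Layer4


/-- exact transport identity for the STFT of the free evolution:
`V_{g(t)}[e^{itΔ/2} u₀](x,ξ) = e^{−it|ξ|²/2} V_g u₀(x − tξ, ξ)`. -/
theorem stft_free_transport {n : ℕ} (g : SchwartzMap (Eu n) ℂ) (t : ℝ)
    (u₀ : SchwartzMap (Eu n) ℂ) :
    ∀ x ξ : Eu n,
      stft (freeEvol t ⇑g) (freeEvol t ⇑u₀) x ξ =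
        Complex.exp (-(Complex.I * t * (‖ξ‖ ^ 2 / 2 : ℝ))) *
          stft (⇑g) (⇑u₀) (x - t • ξ) ξ := by

  intro x ξ
  rw [stft_rep t g u₀ x ξ]
  have h0 : stft (⇑g) (⇑u₀) (x - t • ξ) ξ
      = (((2 * π) ^ n)⁻¹ : ℝ) • ∫ ζ : Eu n,
          (starRingEnd ℂ) (ftrans ⇑g ζ) *
            Complex.exp (Complex.I * ((inner ℝ (x - t • ξ) ζ : ℝ) : ℂ)) *
            ftrans ⇑u₀ (ζ + ξ) := by
    have h := stft_rep 0 g u₀ (x - t • ξ) ξ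
    rw [freeEvol_zero g, freeEvol_zero u₀] at h
    rw [h]
    congr 1
    refine integral_congr_ae (Filter.Eventually.of_forall fun ζ => ?_)
    norm_num
  rw [h0, mul_smul_comm]
  congr 1
  rw [← integral_const_mul]
  refine integral_congr_ae (Filter.Eventually.of_forall fun ζ => ?_)
  simp only []
  rw [conj_cexp_negI_mul, ftrans_freeEvol t u₀ (ζ + ξ)]
  have key : Complex.exp (Complex.I * t * ((‖ζ‖ ^ 2 / 2 : ℝ) : ℂ)) *
        Complex.exp (Complex.I * ((inner ℝ x ζ : ℝ) : ℂ)) *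
        Complex.exp (-(Complex.I * t * ((‖ζ + ξ‖ ^ 2 / 2 : ℝ) : ℂ)))
      = Complex.exp (-(Complex.I * t * ((‖ξ‖ ^ 2 / 2 : ℝ) : ℂ))) *
        Complex.exp (Complex.I * ((inner ℝ (x - t • ξ) ζ : ℝ) : ℂ)) := by
    rw [← Complex.exp_add, ← Complex.exp_add, ← Complex.exp_add]
    congr 1
    have hn2 : ‖ζ + ξ‖ ^ 2 = ‖ζ‖ ^ 2 + 2 * (inner ℝ ζ ξ : ℝ) + ‖ξ‖ ^ 2 := norm_add_sq_real ζ ξ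
    have hi : (inner ℝ (x - t • ξ) ζ : ℝ) = (inner ℝ x ζ : ℝ) - t * (inner ℝ ξ ζ : ℝ) := by
      rw [inner_sub_left, real_inner_smul_left]
    have hcomm : (inner ℝ ζ ξ : ℝ) = (inner ℝ ξ ζ : ℝ) := real_inner_comm ξ ζ
    rw [hn2, hi, hcomm]
    push_cast
    ring
  linear_combination ((starRingEnd ℂ) (ftrans ⇑g ζ) * ftrans ⇑u₀ (ζ + ξ)) * key
end
end
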